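/- arXiv:1810.05314 — 5 statements merged into one kernel-verified Lean document; each statement's English description precedes it below -/
import Mathlib

section
/- Let A be an infinitesimal bialgebra over a field k, i.e., (A,m) an associative algebra, (A,Δ) a coassociative coalgebra, with Δ(ab) = a·Δ(b) + Δ(a)·b where a·(b⊗c) = ab⊗c and (b⊗c)·a = b⊗ca. Then there is no nonzero infinitesimal bialgebra A that is both unitary (has a multiplicative unit 1 with Δ defined on it) and counitary (has a counit ε for Δ). -/
open TensorProduct LinearMap

/-- There is no nonzero infinitesimal bialgebra that is both unitary
and counitary: if `(A, *, 1, Δ)` is a unitary associative algebra over a field `k`,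
`Δ` is coassociative, `Δ` is a derivation for the bimodule structure
`a·(b⊗c) = ab⊗c`, `(b⊗c)·a = b⊗ca`, and `ε` is a counit for `Δ`, then `A = 0`. -/
theorem no_nonzero_unitary_counitary_infinitesimal_bialgebra
    (k : Type*) [Field k] (A : Type*) [Ring A] [Algebra k A]
    (Δ : A →ₗ[k] A ⊗[k] A)
    (hcoassoc : ∀ a : A,
      LinearMap.lTensor A Δ (Δ a) = TensorProduct.assoc k A A A (LinearMap.rTensor A Δ (Δ a)))
    (hder : ∀ a b : A, Δ (a * b) =
      LinearMap.rTensor A (LinearMap.mulLeft k a) (Δ b)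
        + LinearMap.lTensor A (LinearMap.mulRight k b) (Δ a))
    (ε : A →ₗ[k] k)
    (hcounitL : ∀ a : A, TensorProduct.lid k A (LinearMap.rTensor A ε (Δ a)) = a)
    (hcounitR : ∀ a : A, TensorProduct.rid k A (LinearMap.lTensor A ε (Δ a)) = a) :
    ∀ a : A, a = 0 := by
  have h1 : Δ (1 : A) = 0 := by
    have h := hder 1 1
    simp only [one_mul, LinearMap.mulLeft_one, LinearMap.mulRight_one,
      LinearMap.rTensor_id, LinearMap.lTensor_id, LinearMap.id_coe, id_eq] at h
    have := h.symm
    rw [← sub_eq_zero] at this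
    simpa using this
  have h10 : (1 : A) = 0 := by
    have := hcounitL 1
    rw [h1] at this
    simpa using this.symm
  intro a
  calc a = a * 1 := (mul_one a).symm
  _ = a * 0 := by rw [h10]
  _ = 0 := mul_zero a
end

section
/- Let (A,m,Δ) be an infinitesimal bialgebra over a field k of characteristic 0 and set D := m∘Δ : A → A. If D is locally nilpotent with respect to convolution (for each a ∈ A there is n ≥ 1 with D^{∗n}(a) = 0, where D^{∗n} is the n-fold convolution power of D), then A is an infinitesimal Hopf algebra with bijective antipode S = -Σ_{n≥0} (1/n!)(-D)^n. -/
open TensorProduct LinearMap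

/-- `convPow Δ f n` is the `(n+1)`-fold convolution power `f^{∗(n+1)} = f ∗ ⋯ ∗ f`
(`n+1` factors) with respect to the convolution `f ∗ g = m ∘ (f ⊗ g) ∘ Δ`; in
particular `convPow Δ f 0 = f`. -/
noncomputable def convPow (k : Type*) [CommRing k] (A : Type*)
    [NonUnitalRing A] [Module k A] [SMulCommClass k A A] [IsScalarTower k A A]
    (Δ : A →ₗ[k] A ⊗[k] A) (f : A →ₗ[k] A) : ℕ → (A →ₗ[k] A)
  | 0 => f
  | n + 1 => LinearMap.mul' k A ∘ₗ TensorProduct.map (convPow k A Δ f n) f ∘ₗ Δ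

namespace InfHopfAux

variable (k : Type*) [Field k] (A : Type*)
    [NonUnitalRing A] [Module k A] [SMulCommClass k A A] [IsScalarTower k A A]

noncomputable def conv (Δ : A →ₗ[k] A ⊗[k] A) (f g : A →ₗ[k] A) : A →ₗ[k] A :=
  LinearMap.mul' k A ∘ₗ TensorProduct.map f g ∘ₗ Δ

variable (Δ : A →ₗ[k] A ⊗[k] A)

lemma conv_apply (f g : A →ₗ[k] A) (a : A) :
    conv k A Δ f g a = LinearMap.mul' k A (TensorProduct.map f g (Δ a)) := rfl

noncomputable def R : ℕ → (A →ₗ[k] A) :=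
  fun n => (fun f => conv k A Δ f LinearMap.id)^[n] LinearMap.id

lemma R_zero : R k A Δ 0 = LinearMap.id := rfl

lemma R_succ (n : ℕ) : R k A Δ (n + 1) = conv k A Δ (R k A Δ n) LinearMap.id := by
  unfold R; rw [Function.iterate_succ_apply']

lemma triple (f g h : A →ₗ[k] A) (u : A ⊗[k] (A ⊗[k] A)) :
    LinearMap.mul' k A (TensorProduct.map (LinearMap.mul' k A ∘ₗ TensorProduct.map f g) h
      ((TensorProduct.assoc k A A A).symm u))
    = LinearMap.mul' k A (TensorProduct.map f (LinearMap.mul' k A ∘ₗ TensorProduct.map g h) u) := by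
  induction u using TensorProduct.induction_on with
  | zero => simp
  | add u v hu hv => simp [map_add, hu, hv]
  | tmul x t =>
    induction t using TensorProduct.induction_on with
    | zero => simp
    | add s t hs ht => simp only [tmul_add, map_add] at hs ht ⊢; rw [hs, ht]
    | tmul y z => simp [mul_assoc]

lemma conv_assoc
    (hcoassoc : ∀ a : A,
      LinearMap.lTensor A Δ (Δ a) = TensorProduct.assoc k A A A (LinearMap.rTensor A Δ (Δ a)))
    (f g h : A →ₗ[k] A) :
    conv k A Δ (conv k A Δ f g) h = conv k A Δ f (conv k A Δ g h) := by
  ext a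
  have h1 : TensorProduct.map (conv k A Δ f g) h (Δ a)
      = TensorProduct.map (LinearMap.mul' k A ∘ₗ TensorProduct.map f g) h
          (LinearMap.rTensor A Δ (Δ a)) := by
    rw [conv]
    rw [show (LinearMap.mul' k A ∘ₗ TensorProduct.map f g ∘ₗ Δ)
        = (LinearMap.mul' k A ∘ₗ TensorProduct.map f g) ∘ₗ Δ from rfl]
    rw [show h = h ∘ₗ LinearMap.id from rfl]
    rw [TensorProduct.map_comp]
    rfl
  have h2 : TensorProduct.map f (conv k A Δ g h) (Δ a)
      = TensorProduct.map f (LinearMap.mul' k A ∘ₗ TensorProduct.map g h)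
          (LinearMap.lTensor A Δ (Δ a)) := by
    rw [conv]
    rw [show (LinearMap.mul' k A ∘ₗ TensorProduct.map g h ∘ₗ Δ)
        = (LinearMap.mul' k A ∘ₗ TensorProduct.map g h) ∘ₗ Δ from rfl]
    rw [show f = f ∘ₗ LinearMap.id from rfl]
    rw [TensorProduct.map_comp]
    rfl
  simp only [conv_apply, LinearMap.comp_apply] at *
  rw [h1, h2, show LinearMap.rTensor A Δ (Δ a)
      = (TensorProduct.assoc k A A A).symm (LinearMap.lTensor A Δ (Δ a)) by
        rw [hcoassoc a]; simp]
  exact triple k A f g h _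

lemma conv_id_id : conv k A Δ LinearMap.id LinearMap.id = LinearMap.mul' k A ∘ₗ Δ := by
  unfold conv; rw [TensorProduct.map_id]; rfl

lemma conv_R (hcoassoc : ∀ a : A,
      LinearMap.lTensor A Δ (Δ a) = TensorProduct.assoc k A A A (LinearMap.rTensor A Δ (Δ a)))
    (i j : ℕ) : conv k A Δ (R k A Δ i) (R k A Δ j) = R k A Δ (i + j + 1) := by
  induction j with
  | zero => rw [R_zero, ← R_succ]
  | succ j ih =>
    calc conv k A Δ (R k A Δ i) (R k A Δ (j+1))
        = conv k A Δ (R k A Δ i) (conv k A Δ (R k A Δ j) LinearMap.id) := by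
          rw [R_succ k A Δ j]
      _ = conv k A Δ (conv k A Δ (R k A Δ i) (R k A Δ j)) LinearMap.id :=
          (conv_assoc k A Δ hcoassoc _ _ _).symm
      _ = conv k A Δ (R k A Δ (i+j+1)) LinearMap.id := by rw [ih]
      _ = R k A Δ (i+j+1+1) := (R_succ k A Δ (i+j+1)).symm
      _ = R k A Δ (i+(j+1)+1) := rfl

lemma mul_rT (x : A) (t : A ⊗[k] A) :
    LinearMap.mul' k A (LinearMap.rTensor A (LinearMap.mulLeft k x) t)
      = x * LinearMap.mul' k A t := by
  induction t using TensorProduct.induction_on with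
  | zero => simp
  | add u v hu hv => simp only [map_add, hu, hv, mul_add]
  | tmul y z => simp [mul_assoc]

lemma mul_lT (y : A) (t : A ⊗[k] A) :
    LinearMap.mul' k A (LinearMap.lTensor A (LinearMap.mulRight k y) t)
      = LinearMap.mul' k A t * y := by
  induction t using TensorProduct.induction_on with
  | zero => simp
  | add u v hu hv => simp only [map_add, hu, hv, add_mul]
  | tmul a b => simp [mul_assoc]

lemma D_mul (hder : ∀ a b : A, Δ (a * b) =
      LinearMap.rTensor A (LinearMap.mulLeft k a) (Δ b)
        + LinearMap.lTensor A (LinearMap.mulRight k b) (Δ a))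
    (D : A →ₗ[k] A) (hD : D = LinearMap.mul' k A ∘ₗ Δ)
    (x y : A) : D (x * y) = D x * y + x * D y := by
  rw [hD]
  simp only [LinearMap.comp_apply]
  rw [hder x y, map_add, mul_rT, mul_lT]
  exact add_comm _ _

lemma D_M (hder : ∀ a b : A, Δ (a * b) =
      LinearMap.rTensor A (LinearMap.mulLeft k a) (Δ b)
        + LinearMap.lTensor A (LinearMap.mulRight k b) (Δ a))
    (D : A →ₗ[k] A) (hD : D = LinearMap.mul' k A ∘ₗ Δ)
    (t : A ⊗[k] A) :
    D (LinearMap.mul' k A t) =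
      LinearMap.mul' k A (LinearMap.rTensor A D t)
        + LinearMap.mul' k A (LinearMap.lTensor A D t) := by
  induction t using TensorProduct.induction_on with
  | zero => simp
  | add u v hu hv => simp only [map_add, hu, hv]; abel
  | tmul x y => simpa using D_mul k A Δ hder D hD x y

lemma D_eq_R_one (D : A →ₗ[k] A) (hD : D = LinearMap.mul' k A ∘ₗ Δ) : D = R k A Δ 1 := by
  rw [R_succ, R_zero, conv_id_id, hD]

lemma D_comp_R (hcoassoc : ∀ a : A,
      LinearMap.lTensor A Δ (Δ a) = TensorProduct.assoc k A A A (LinearMap.rTensor A Δ (Δ a)))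
    (hder : ∀ a b : A, Δ (a * b) =
      LinearMap.rTensor A (LinearMap.mulLeft k a) (Δ b)
        + LinearMap.lTensor A (LinearMap.mulRight k b) (Δ a))
    (D : A →ₗ[k] A) (hD : D = LinearMap.mul' k A ∘ₗ Δ)
    (n : ℕ) : D ∘ₗ R k A Δ n = (n + 1) • R k A Δ (n + 1) := by
  induction n with
  | zero =>
    rw [R_zero, zero_add, one_smul]
    exact (LinearMap.comp_id D).trans (D_eq_R_one k A Δ D hD)
  | succ n ih =>
    ext a
    rw [LinearMap.comp_apply, R_succ k A Δ n, conv_apply]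
    rw [D_M k A Δ hder D hD]
    have e1 : LinearMap.rTensor A D (TensorProduct.map (R k A Δ n) LinearMap.id (Δ a))
        = TensorProduct.map (D ∘ₗ R k A Δ n) LinearMap.id (Δ a) := by
      rw [← LinearMap.comp_apply, show LinearMap.rTensor A D
        = TensorProduct.map D LinearMap.id from rfl, ← TensorProduct.map_comp,
        LinearMap.id_comp]
    have e2 : LinearMap.lTensor A D (TensorProduct.map (R k A Δ n) LinearMap.id (Δ a))
        = TensorProduct.map (R k A Δ n) D (Δ a) := by
      rw [← LinearMap.comp_apply, show LinearMap.lTensor A D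
        = TensorProduct.map LinearMap.id D from rfl, ← TensorProduct.map_comp,
        LinearMap.id_comp, LinearMap.comp_id]
    rw [e1, e2, ih]
    have key : LinearMap.mul' k A (TensorProduct.map (R k A Δ (n+1)) LinearMap.id (Δ a))
        = R k A Δ (n+1+1) a := by
      rw [← conv_apply, ← R_succ k A Δ (n+1)]
    have e3 : LinearMap.mul' k A (TensorProduct.map ((n+1) • R k A Δ (n+1)) LinearMap.id (Δ a))
        = (n+1) • R k A Δ (n+1+1) a := by
      rw [← Nat.cast_smul_eq_nsmul k (n+1) (R k A Δ (n+1)),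
        TensorProduct.map_smul_left, LinearMap.smul_apply, map_smul, key,
        Nat.cast_smul_eq_nsmul]
    have e4 : LinearMap.mul' k A (TensorProduct.map (R k A Δ n) D (Δ a))
        = R k A Δ (n + 1 + 1) a := by
      rw [← conv_apply, D_eq_R_one k A Δ D hD, conv_R k A Δ hcoassoc n 1]
    rw [e3, e4, LinearMap.smul_apply, succ_nsmul ((R k A Δ (n+1+1)) a) (n+1)]

lemma D_pow (hcoassoc : ∀ a : A,
      LinearMap.lTensor A Δ (Δ a) = TensorProduct.assoc k A A A (LinearMap.rTensor A Δ (Δ a)))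
    (hder : ∀ a b : A, Δ (a * b) =
      LinearMap.rTensor A (LinearMap.mulLeft k a) (Δ b)
        + LinearMap.lTensor A (LinearMap.mulRight k b) (Δ a))
    (D : A →ₗ[k] A) (hD : D = LinearMap.mul' k A ∘ₗ Δ)
    (m : ℕ) : (D ^ m : A →ₗ[k] A) = m.factorial • R k A Δ m := by
  induction m with
  | zero => simp [R_zero]; rfl
  | succ m ih =>
    ext a
    rw [pow_succ' (M := A →ₗ[k] A) D m, Module.End.mul_apply, ih, LinearMap.smul_apply,
      map_nsmul, ← LinearMap.comp_apply, D_comp_R k A Δ hcoassoc hder D hD m,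
      LinearMap.smul_apply, LinearMap.smul_apply, smul_smul, Nat.factorial_succ, mul_comm]

lemma convPow_eq (hcoassoc : ∀ a : A,
      LinearMap.lTensor A Δ (Δ a) = TensorProduct.assoc k A A A (LinearMap.rTensor A Δ (Δ a)))
    (D : A →ₗ[k] A) (hD : D = LinearMap.mul' k A ∘ₗ Δ) (n : ℕ) :
    convPow k A Δ D n = R k A Δ (2*n+1) := by
  induction n with
  | zero => exact D_eq_R_one k A Δ D hD
  | succ n ih =>
    show LinearMap.mul' k A ∘ₗ TensorProduct.map (convPow k A Δ D n) D ∘ₗ Δ = _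
    rw [ih]
    rw [show (LinearMap.mul' k A ∘ₗ TensorProduct.map (R k A Δ (2*n+1)) D ∘ₗ Δ)
      = conv k A Δ (R k A Δ (2*n+1)) D from rfl]
    rw [D_eq_R_one k A Δ D hD, conv_R k A Δ hcoassoc (2*n+1) 1,
      show 2*n+1+1+1 = 2*(n+1)+1 by omega]

lemma R_vanish [CharZero k] (hcoassoc : ∀ a : A,
      LinearMap.lTensor A Δ (Δ a) = TensorProduct.assoc k A A A (LinearMap.rTensor A Δ (Δ a)))
    (hder : ∀ a b : A, Δ (a * b) =
      LinearMap.rTensor A (LinearMap.mulLeft k a) (Δ b)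
        + LinearMap.lTensor A (LinearMap.mulRight k b) (Δ a))
    (D : A →ₗ[k] A) (hD : D = LinearMap.mul' k A ∘ₗ Δ)
    (a : A) (N : ℕ) (h : R k A Δ N a = 0) : ∀ m, N ≤ m → R k A Δ m a = 0 := by
  intro m hm
  induction m, hm using Nat.le_induction with
  | base => exact h
  | succ m hm ih =>
    have h2 : ((m+1 : ℕ) : k) • R k A Δ (m+1) a = 0 := by
      rw [Nat.cast_smul_eq_nsmul, ← LinearMap.smul_apply,
        ← D_comp_R k A Δ hcoassoc hder D hD m, LinearMap.comp_apply, ih, map_zero]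
    have hne : ((m+1:ℕ):k) ≠ 0 := Nat.cast_ne_zero.mpr (Nat.succ_ne_zero m)
    exact (smul_eq_zero.mp h2).resolve_left hne

noncomputable def esum (D : A →ₗ[k] A) (c : k) (N : ℕ) (a : A) : A :=
  ∑ m ∈ Finset.range N, (c ^ m * (m.factorial : k)⁻¹) • (D ^ m) a

lemma esum_stable (D : A →ₗ[k] A) (c : k) (a : A) (N N' : ℕ) (h : N ≤ N')
    (hv : ∀ m, N ≤ m → (D ^ m) a = 0) :
    esum k A D c N' a = esum k A D c N a := by
  unfold esum
  refine (Finset.sum_subset (Finset.range_subset_range.mpr h) ?_).symm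
  intro m _ hnotm
  rw [hv m (le_of_not_gt (fun hc => hnotm (Finset.mem_range.mpr hc))), smul_zero]

lemma esum_add (D : A →ₗ[k] A) (c : k) (N : ℕ) (a b : A) :
    esum k A D c N (a + b) = esum k A D c N a + esum k A D c N b := by
  unfold esum
  rw [← Finset.sum_add_distrib]
  exact Finset.sum_congr rfl fun m _ => by rw [map_add, smul_add]

lemma esum_smul (D : A →ₗ[k] A) (c r : k) (N : ℕ) (a : A) :
    esum k A D c N (r • a) = r • esum k A D c N a := by
  unfold esum
  rw [Finset.smul_sum]
  exact Finset.sum_congr rfl fun m _ => by rw [map_smul, smul_comm]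

lemma esum_neg (D : A →ₗ[k] A) (c : k) (N : ℕ) (a : A) :
    esum k A D c N (-a) = -esum k A D c N a := by
  have := esum_smul k A D c (-1 : k) N a
  simpa using this

noncomputable def Saux (D : A →ₗ[k] A)
    (hnil : ∀ a : A, ∃ N, ∀ m, N ≤ m → (D ^ m) a = 0) : A →ₗ[k] A where
  toFun a := -esum k A D (-1) (hnil a).choose a
  map_add' a b := by
    have ea : esum k A D (-1) (hnil a).choose a
        = esum k A D (-1) (max (hnil a).choose (max (hnil b).choose (hnil (a+b)).choose)) a :=
      (esum_stable k A D (-1) a _ _ (le_max_left _ _) (hnil a).choose_spec).symm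
    have eb : esum k A D (-1) (hnil b).choose b
        = esum k A D (-1) (max (hnil a).choose (max (hnil b).choose (hnil (a+b)).choose)) b :=
      (esum_stable k A D (-1) b _ _ (le_max_of_le_right (le_max_left _ _))
        (hnil b).choose_spec).symm
    have eab : esum k A D (-1) (hnil (a+b)).choose (a+b)
        = esum k A D (-1) (max (hnil a).choose (max (hnil b).choose (hnil (a+b)).choose)) (a+b) :=
      (esum_stable k A D (-1) (a+b) _ _ (le_max_of_le_right (le_max_right _ _))
        (hnil (a+b)).choose_spec).symm
    show -esum k A D (-1) (hnil (a+b)).choose (a+b)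
      = -esum k A D (-1) (hnil a).choose a + -esum k A D (-1) (hnil b).choose b
    rw [ea, eb, eab, esum_add, neg_add]
  map_smul' r a := by
    have ea : esum k A D (-1) (hnil a).choose a
        = esum k A D (-1) (max (hnil a).choose (hnil (r • a)).choose) a :=
      (esum_stable k A D (-1) a _ _ (le_max_left _ _) (hnil a).choose_spec).symm
    have era : esum k A D (-1) (hnil (r • a)).choose (r • a)
        = esum k A D (-1) (max (hnil a).choose (hnil (r • a)).choose) (r • a) :=
      (esum_stable k A D (-1) (r • a) _ _ (le_max_right _ _)
        (hnil (r • a)).choose_spec).symm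
    show -esum k A D (-1) (hnil (r • a)).choose (r • a)
      = (RingHom.id k) r • -esum k A D (-1) (hnil a).choose a
    rw [ea, era, esum_smul, smul_neg]; rfl

lemma Saux_apply (D : A →ₗ[k] A)
    (hnil : ∀ a : A, ∃ N, ∀ m, N ≤ m → (D ^ m) a = 0)
    (a : A) (N : ℕ) (hv : ∀ m, N ≤ m → (D ^ m) a = 0) :
    Saux k A D hnil a = -esum k A D (-1) N a := by
  show -esum k A D (-1) (hnil a).choose a = _
  set M := max N (hnil a).choose
  rw [show esum k A D (-1) (hnil a).choose a = esum k A D (-1) M a from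
      (esum_stable k A D (-1) a _ M (le_max_right _ _) (hnil a).choose_spec).symm,
    show esum k A D (-1) N a = esum k A D (-1) M a from
      (esum_stable k A D (-1) a _ M (le_max_left _ _) hv).symm]

lemma esum_vanish (D : A →ₗ[k] A) (c : k) (N N' : ℕ) (a : A)
    (hv : ∀ m, N ≤ m → (D ^ m) a = 0) :
    ∀ m, N ≤ m → (D ^ m) (esum k A D c N' a) = 0 := by
  intro m hm
  unfold esum
  rw [map_sum]
  refine Finset.sum_eq_zero fun j _ => ?_
  rw [map_smul, ← Module.End.mul_apply, ← pow_add,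
    hv (m+j) (le_trans hm (Nat.le_add_right _ _)), smul_zero]

lemma double_diag {M : Type*} [AddCommMonoid M] (N : ℕ) (F : ℕ → ℕ → M)
    (hF : ∀ m j, N ≤ m + j → F m j = 0) :
    ∑ m ∈ Finset.range N, ∑ j ∈ Finset.range N, F m j
      = ∑ s ∈ Finset.range N, ∑ i ∈ Finset.range (s+1), F i (s - i) := by
  have h1 : ∑ m ∈ Finset.range N, ∑ j ∈ Finset.range N, F m j
      = ∑ p ∈ (Finset.range N ×ˢ Finset.range N).filter (fun p => p.1 + p.2 < N),
          F p.1 p.2 := by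
    rw [← Finset.sum_product']
    exact (Finset.sum_filter_of_ne (fun p _ h => by
      by_contra hc
      exact h (hF _ _ (le_of_not_gt hc)))).symm
  have h2 : ∑ s ∈ Finset.range N, ∑ i ∈ Finset.range (s+1), F i (s - i)
      = ∑ x ∈ (Finset.range N).sigma (fun s => Finset.range (s+1)), F x.2 (x.1 - x.2) :=
    (Finset.sum_sigma (Finset.range N) (fun s => Finset.range (s+1)) (fun x => F x.2 (x.1 - x.2))).symm
  rw [h1, h2]
  refine Finset.sum_nbij' (i := fun (p : ℕ × ℕ) => (⟨p.1 + p.2, p.1⟩ : (_ : ℕ) × ℕ))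
    (j := fun (x : (_ : ℕ) × ℕ) => ((x.2, x.1 - x.2) : ℕ × ℕ)) ?_ ?_ ?_ ?_ ?_
  · intro p hp
    simp only [Finset.mem_filter, Finset.mem_product, Finset.mem_range] at hp
    simp only [Finset.mem_sigma, Finset.mem_range]
    omega
  · intro x hx
    simp only [Finset.mem_sigma, Finset.mem_range] at hx
    simp only [Finset.mem_filter, Finset.mem_product, Finset.mem_range]
    omega
  · intro p hp
    simp only [Finset.mem_filter, Finset.mem_product, Finset.mem_range] at hp
    simp only [Nat.add_sub_cancel_left]
  · intro x hx
    simp only [Finset.mem_sigma, Finset.mem_range] at hx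
    refine Sigma.ext ?_ (heq_of_eq ?_) <;> simp <;> omega
  · intro p hp
    have h5 : F p.1 p.2 = F p.1 (p.1 + p.2 - p.1) := by rw [Nat.add_sub_cancel_left]
    exact h5

lemma esum_comp [CharZero k] (D : A →ₗ[k] A) (c d : k) (N : ℕ) (a : A)
    (hv : ∀ m, N ≤ m → (D ^ m) a = 0) :
    esum k A D c N (esum k A D d N a) = esum k A D (c + d) N a := by
  have expand : esum k A D c N (esum k A D d N a)
      = ∑ m ∈ Finset.range N, ∑ j ∈ Finset.range N,
          (c^m * d^j * ((m.factorial:k)⁻¹ * (j.factorial:k)⁻¹)) • (D^(m+j)) a := by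
    unfold esum
    refine Finset.sum_congr rfl fun m _ => ?_
    rw [map_sum, Finset.smul_sum]
    refine Finset.sum_congr rfl fun j _ => ?_
    rw [map_smul, smul_smul, pow_add, Module.End.mul_apply]
    congr 1
    ring
  rw [expand, double_diag N _ (fun m j h => by rw [hv (m+j) h, smul_zero])]
  unfold esum
  refine Finset.sum_congr rfl fun s _ => ?_
  rw [add_pow, Finset.sum_mul, Finset.sum_smul]
  refine Finset.sum_congr rfl fun i hi => ?_
  have hle : i ≤ s := Nat.lt_succ_iff.mp (Finset.mem_range.mp hi)
  have h'' : ((s.choose i : ℕ):k) * (i.factorial:k) * ((s-i).factorial:k) = (s.factorial:k) := by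
    exact_mod_cast congrArg (Nat.cast : ℕ → k) (Nat.choose_mul_factorial_mul_factorial hle)
  have hfi : (i.factorial:k) ≠ 0 := Nat.cast_ne_zero.mpr (Nat.factorial_ne_zero _)
  have hfsi : ((s-i).factorial:k) ≠ 0 := Nat.cast_ne_zero.mpr (Nat.factorial_ne_zero _)
  have hfs : (s.factorial:k) ≠ 0 := Nat.cast_ne_zero.mpr (Nat.factorial_ne_zero _)
  have key : ((s.choose i : ℕ) : k) * (s.factorial : k)⁻¹
      = (i.factorial : k)⁻¹ * ((s-i).factorial:k)⁻¹ := by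
    field_simp
    linear_combination h''
  rw [show i + (s - i) = s from Nat.add_sub_cancel' hle]
  congr 1
  rw [← key]
  ring

lemma esum_zero (D : A →ₗ[k] A) (N : ℕ) (hN : 1 ≤ N) (a : A) :
    esum k A D 0 N a = a := by
  unfold esum
  rw [Finset.sum_eq_single 0]
  · simp
  · intro m _ hm
    rw [zero_pow hm, zero_mul, zero_smul]
  · intro h
    exact absurd (Finset.mem_range.mpr hN) h

lemma Saux_R [CharZero k] (hcoassoc : ∀ a : A,
      LinearMap.lTensor A Δ (Δ a) = TensorProduct.assoc k A A A (LinearMap.rTensor A Δ (Δ a)))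
    (hder : ∀ a b : A, Δ (a * b) =
      LinearMap.rTensor A (LinearMap.mulLeft k a) (Δ b)
        + LinearMap.lTensor A (LinearMap.mulRight k b) (Δ a))
    (D : A →ₗ[k] A) (hD : D = LinearMap.mul' k A ∘ₗ Δ)
    (hnil : ∀ a : A, ∃ N, ∀ m, N ≤ m → (D ^ m) a = 0)
    (a : A) (N : ℕ) (hvR : ∀ m, N ≤ m → R k A Δ m a = 0) :
    Saux k A D hnil a = ∑ m ∈ Finset.range N, ((-1:k)^(m+1)) • R k A Δ m a := by
  have hvD : ∀ m, N ≤ m → (D^m) a = 0 := fun m hm => by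
    rw [D_pow k A Δ hcoassoc hder D hD m, LinearMap.smul_apply, hvR m hm, smul_zero]
  rw [Saux_apply k A D hnil a N hvD]
  unfold esum
  rw [neg_eq_iff_eq_neg, ← Finset.sum_neg_distrib]
  refine Finset.sum_congr rfl fun m _ => ?_
  rw [D_pow k A Δ hcoassoc hder D hD m, LinearMap.smul_apply,
    ← Nat.cast_smul_eq_nsmul k, smul_smul]
  have hf : ((m.factorial:ℕ):k) ≠ 0 := Nat.cast_ne_zero.mpr (Nat.factorial_ne_zero m)
  rw [show (-1:k)^m * (m.factorial:k)⁻¹ * (m.factorial:k) = (-1:k)^m by field_simp,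
    show ((-1:k)^(m+1)) = -((-1:k)^m) by rw [pow_succ]; ring, neg_smul, neg_neg]

lemma negpow (D : A →ₗ[k] A) (m : ℕ) (x : A) :
    ((-D)^m) x = ((-1:k)^m) • (D^m) x := by
  rw [show (-D) = (-1:k) • D by rw [neg_smul, one_smul], smul_pow, LinearMap.smul_apply]

lemma rlem [CharZero k] (hcoassoc : ∀ a : A,
      LinearMap.lTensor A Δ (Δ a) = TensorProduct.assoc k A A A (LinearMap.rTensor A Δ (Δ a)))
    (hder : ∀ a b : A, Δ (a * b) =
      LinearMap.rTensor A (LinearMap.mulLeft k a) (Δ b)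
        + LinearMap.lTensor A (LinearMap.mulRight k b) (Δ a))
    (D : A →ₗ[k] A) (hD : D = LinearMap.mul' k A ∘ₗ Δ)
    (hnil : ∀ a : A, ∃ N, ∀ m, N ≤ m → (D ^ m) a = 0)
    (hnilR : ∀ x : A, ∃ N, ∀ m, N ≤ m → R k A Δ m x = 0) (t : A ⊗[k] A) :
    ∃ N : ℕ, (∀ m, N ≤ m → TensorProduct.map (R k A Δ m) LinearMap.id t = 0)
      ∧ TensorProduct.map (Saux k A D hnil) LinearMap.id t
          = ∑ m ∈ Finset.range N,
              ((-1:k)^(m+1)) • TensorProduct.map (R k A Δ m) LinearMap.id t := by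
  induction t using TensorProduct.induction_on with
  | zero => exact ⟨0, fun m _ => map_zero _, by simp⟩
  | tmul x y =>
    obtain ⟨N, hN⟩ := hnilR x
    refine ⟨N, fun m hm => ?_, ?_⟩
    · rw [TensorProduct.map_tmul, hN m hm, TensorProduct.zero_tmul]
    · rw [TensorProduct.map_tmul, Saux_R k A Δ hcoassoc hder D hD hnil x N hN,
        TensorProduct.sum_tmul]
      refine Finset.sum_congr rfl fun m _ => ?_
      rw [TensorProduct.map_tmul, TensorProduct.smul_tmul']
  | add u v hu hv =>
    obtain ⟨Nu, hu1, hu2⟩ := hu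
    obtain ⟨Nv, hv1, hv2⟩ := hv
    refine ⟨max Nu Nv, fun m hm => ?_, ?_⟩
    · rw [map_add, hu1 m (le_trans (le_max_left _ _) hm),
        hv1 m (le_trans (le_max_right _ _) hm), add_zero]
    · have eu : ∑ m ∈ Finset.range Nu,
            ((-1:k)^(m+1)) • TensorProduct.map (R k A Δ m) LinearMap.id u
          = ∑ m ∈ Finset.range (max Nu Nv),
            ((-1:k)^(m+1)) • TensorProduct.map (R k A Δ m) LinearMap.id u := by
        refine Finset.sum_subset (Finset.range_subset_range.mpr (le_max_left _ _)) ?_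
        intro m _ hm
        rw [hu1 m (le_of_not_gt (fun hc => hm (Finset.mem_range.mpr hc))), smul_zero]
      have ev : ∑ m ∈ Finset.range Nv,
            ((-1:k)^(m+1)) • TensorProduct.map (R k A Δ m) LinearMap.id v
          = ∑ m ∈ Finset.range (max Nu Nv),
            ((-1:k)^(m+1)) • TensorProduct.map (R k A Δ m) LinearMap.id v := by
        refine Finset.sum_subset (Finset.range_subset_range.mpr (le_max_right _ _)) ?_
        intro m _ hm
        rw [hv1 m (le_of_not_gt (fun hc => hm (Finset.mem_range.mpr hc))), smul_zero]
      rw [map_add, hu2, hv2, eu, ev, ← Finset.sum_add_distrib]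
      refine Finset.sum_congr rfl fun m _ => ?_
      rw [map_add, smul_add]

lemma llem [CharZero k] (hcoassoc : ∀ a : A,
      LinearMap.lTensor A Δ (Δ a) = TensorProduct.assoc k A A A (LinearMap.rTensor A Δ (Δ a)))
    (hder : ∀ a b : A, Δ (a * b) =
      LinearMap.rTensor A (LinearMap.mulLeft k a) (Δ b)
        + LinearMap.lTensor A (LinearMap.mulRight k b) (Δ a))
    (D : A →ₗ[k] A) (hD : D = LinearMap.mul' k A ∘ₗ Δ)
    (hnil : ∀ a : A, ∃ N, ∀ m, N ≤ m → (D ^ m) a = 0)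
    (hnilR : ∀ x : A, ∃ N, ∀ m, N ≤ m → R k A Δ m x = 0) (t : A ⊗[k] A) :
    ∃ N : ℕ, (∀ m, N ≤ m → TensorProduct.map LinearMap.id (R k A Δ m) t = 0)
      ∧ TensorProduct.map LinearMap.id (Saux k A D hnil) t
          = ∑ m ∈ Finset.range N,
              ((-1:k)^(m+1)) • TensorProduct.map LinearMap.id (R k A Δ m) t := by
  induction t using TensorProduct.induction_on with
  | zero => exact ⟨0, fun m _ => map_zero _, by simp⟩
  | tmul x y =>
    obtain ⟨N, hN⟩ := hnilR y
    refine ⟨N, fun m hm => ?_, ?_⟩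
    · rw [TensorProduct.map_tmul, hN m hm, TensorProduct.tmul_zero]
    · rw [TensorProduct.map_tmul, Saux_R k A Δ hcoassoc hder D hD hnil y N hN,
        TensorProduct.tmul_sum]
      refine Finset.sum_congr rfl fun m _ => ?_
      rw [TensorProduct.map_tmul, TensorProduct.tmul_smul]
  | add u v hu hv =>
    obtain ⟨Nu, hu1, hu2⟩ := hu
    obtain ⟨Nv, hv1, hv2⟩ := hv
    refine ⟨max Nu Nv, fun m hm => ?_, ?_⟩
    · rw [map_add, hu1 m (le_trans (le_max_left _ _) hm),
        hv1 m (le_trans (le_max_right _ _) hm), add_zero]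
    · have eu : ∑ m ∈ Finset.range Nu,
            ((-1:k)^(m+1)) • TensorProduct.map LinearMap.id (R k A Δ m) u
          = ∑ m ∈ Finset.range (max Nu Nv),
            ((-1:k)^(m+1)) • TensorProduct.map LinearMap.id (R k A Δ m) u := by
        refine Finset.sum_subset (Finset.range_subset_range.mpr (le_max_left _ _)) ?_
        intro m _ hm
        rw [hu1 m (le_of_not_gt (fun hc => hm (Finset.mem_range.mpr hc))), smul_zero]
      have ev : ∑ m ∈ Finset.range Nv,
            ((-1:k)^(m+1)) • TensorProduct.map LinearMap.id (R k A Δ m) v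
          = ∑ m ∈ Finset.range (max Nu Nv),
            ((-1:k)^(m+1)) • TensorProduct.map LinearMap.id (R k A Δ m) v := by
        refine Finset.sum_subset (Finset.range_subset_range.mpr (le_max_right _ _)) ?_
        intro m _ hm
        rw [hv1 m (le_of_not_gt (fun hc => hm (Finset.mem_range.mpr hc))), smul_zero]
      rw [map_add, hu2, hv2, eu, ev, ← Finset.sum_add_distrib]
      refine Finset.sum_congr rfl fun m _ => ?_
      rw [map_add, smul_add]

end InfHopfAux

open InfHopfAux

/-- Let `(A, m, Δ)` be an infinitesimal bialgebra over a field of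
characteristic `0` and `D := m ∘ Δ`.  If `D` is locally nilpotent with respect to
convolution (for each `a` some convolution power of `D` kills `a`), then `A` is an
infinitesimal Hopf algebra with bijective antipode `S = -Σ_{n≥0} (1/n!) (-D)^n`,
the sum being finite on each element. -/
theorem infinitesimal_hopf_of_locally_nilpotent
    (k : Type*) [Field k] [CharZero k] (A : Type*)
    [NonUnitalRing A] [Module k A] [SMulCommClass k A A] [IsScalarTower k A A]
    (Δ : A →ₗ[k] A ⊗[k] A)
    (hcoassoc : ∀ a : A,
      LinearMap.lTensor A Δ (Δ a) = TensorProduct.assoc k A A A (LinearMap.rTensor A Δ (Δ a)))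
    (hder : ∀ a b : A, Δ (a * b) =
      LinearMap.rTensor A (LinearMap.mulLeft k a) (Δ b)
        + LinearMap.lTensor A (LinearMap.mulRight k b) (Δ a))
    (D : A →ₗ[k] A) (hD : D = LinearMap.mul' k A ∘ₗ Δ)
    (hln : ∀ a : A, ∃ n : ℕ, 1 ≤ n ∧ convPow k A Δ D (n - 1) a = 0) :
    ∃ S : A →ₗ[k] A, Function.Bijective S
      ∧ (∀ a : A,
          LinearMap.mul' k A (TensorProduct.map S LinearMap.id (Δ a)) + S a + a = 0)
      ∧ (∀ a : A,
          LinearMap.mul' k A (TensorProduct.map LinearMap.id S (Δ a)) + S a + a = 0)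
      ∧ (∀ a : A, ∃ N : ℕ, (∀ m : ℕ, N ≤ m → ((-D) ^ m) a = 0)
          ∧ S a = -∑ m ∈ Finset.range N, (m.factorial : k)⁻¹ • ((-D) ^ m) a) := by
  -- local nilpotency of the family R under composition
  have hnilR : ∀ a : A, ∃ N, 1 ≤ N ∧ ∀ m, N ≤ m → R k A Δ m a = 0 := by
    intro a
    obtain ⟨n, hn1, h0⟩ := hln a
    rw [convPow_eq k A Δ hcoassoc D hD (n-1)] at h0
    exact ⟨2*(n-1)+1, by omega,
      R_vanish k A Δ hcoassoc hder D hD a (2*(n-1)+1) h0⟩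
  have hnilR' : ∀ a : A, ∃ N, ∀ m, N ≤ m → R k A Δ m a = 0 := by
    intro a; obtain ⟨N, _, h⟩ := hnilR a; exact ⟨N, h⟩
  have hvDofR : ∀ (a : A) (N : ℕ), (∀ m, N ≤ m → R k A Δ m a = 0) →
      ∀ m, N ≤ m → (D ^ m) a = 0 := by
    intro a N h m hm
    rw [D_pow k A Δ hcoassoc hder D hD m, LinearMap.smul_apply, h m hm, smul_zero]
  have hnil : ∀ a : A, ∃ N, ∀ m, N ≤ m → (D ^ m) a = 0 := by
    intro a
    obtain ⟨N, _, h⟩ := hnilR a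
    exact ⟨N, hvDofR a N h⟩
  refine ⟨Saux k A D hnil, ?_, ?_, ?_, ?_⟩
  · -- Bijectivity
    have hnilneg : ∀ a : A, ∃ N, ∀ m, N ≤ m → ((-D) ^ m) a = 0 := by
      intro a
      obtain ⟨N, hv⟩ := hnil a
      exact ⟨N, fun m hm => by rw [negpow k A D m a, hv m hm, smul_zero]⟩
    have Tapply : ∀ (b : A) (N : ℕ), (∀ m, N ≤ m → (D ^ m) b = 0) →
        Saux k A (-D) hnilneg b = -esum k A D 1 N b := by
      intro b N hv
      have hvneg : ∀ m, N ≤ m → ((-D) ^ m) b = 0 := fun m hm => by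
        rw [negpow k A D m b, hv m hm, smul_zero]
      rw [Saux_apply k A (-D) hnilneg b N hvneg]
      congr 1
      unfold esum
      refine Finset.sum_congr rfl fun m _ => ?_
      rw [negpow k A D m b, smul_smul]
      congr 1
      have h1 : (-1:k)^m * (-1:k)^m = 1 := by
        rw [← mul_pow]; norm_num
      calc (-1:k)^m * (m.factorial:k)⁻¹ * (-1:k)^m
          = ((-1:k)^m * (-1:k)^m) * (m.factorial:k)⁻¹ := by ring
        _ = (1:k)^m * (m.factorial:k)⁻¹ := by rw [h1, one_pow]
    have inv1 : ∀ a : A, Saux k A (-D) hnilneg (Saux k A D hnil a) = a := by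
      intro a
      obtain ⟨N0, hN01, hvR⟩ := hnilR a
      have hv : ∀ m, N0 ≤ m → (D ^ m) a = 0 := hvDofR a N0 hvR
      have hSa : Saux k A D hnil a = -esum k A D (-1) N0 a :=
        Saux_apply k A D hnil a N0 hv
      have hvS : ∀ m, N0 ≤ m → (D ^ m) (Saux k A D hnil a) = 0 := by
        intro m hm
        rw [hSa, map_neg, esum_vanish k A D (-1) N0 N0 a hv m hm, neg_zero]
      rw [Tapply _ N0 hvS, hSa, esum_neg, neg_neg,
        esum_comp k A D 1 (-1) N0 a hv, show (1:k) + (-1) = 0 by ring,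
        esum_zero k A D N0 hN01 a]
    have inv2 : ∀ a : A, Saux k A D hnil (Saux k A (-D) hnilneg a) = a := by
      intro a
      obtain ⟨N0, hN01, hvR⟩ := hnilR a
      have hv : ∀ m, N0 ≤ m → (D ^ m) a = 0 := hvDofR a N0 hvR
      have hTa : Saux k A (-D) hnilneg a = -esum k A D 1 N0 a := Tapply a N0 hv
      have hvT : ∀ m, N0 ≤ m → (D ^ m) (Saux k A (-D) hnilneg a) = 0 := by
        intro m hm
        rw [hTa, map_neg, esum_vanish k A D 1 N0 N0 a hv m hm, neg_zero]
      rw [Saux_apply k A D hnil _ N0 hvT, hTa, esum_neg, neg_neg,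
        esum_comp k A D (-1) 1 N0 a hv, show (-1:k) + 1 = 0 by ring,
        esum_zero k A D N0 hN01 a]
    exact Function.bijective_iff_has_inverse.mpr ⟨Saux k A (-D) hnilneg, inv1, inv2⟩
  · -- left antipode identity
    intro a
    obtain ⟨N₁, h₁v, h₁⟩ := rlem k A Δ hcoassoc hder D hD hnil hnilR' (Δ a)
    obtain ⟨N₂, hN₂1, h₂v⟩ := hnilR a
    have h₁' : TensorProduct.map (Saux k A D hnil) LinearMap.id (Δ a)
        = ∑ m ∈ Finset.range (max N₁ N₂),
            ((-1:k)^(m+1)) • TensorProduct.map (R k A Δ m) LinearMap.id (Δ a) := by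
      rw [h₁]
      refine Finset.sum_subset (Finset.range_subset_range.mpr (le_max_left _ _)) ?_
      intro m _ hm
      rw [h₁v m (le_of_not_gt (fun hc => hm (Finset.mem_range.mpr hc))), smul_zero]
    have h2 : LinearMap.mul' k A (TensorProduct.map (Saux k A D hnil) LinearMap.id (Δ a))
        = ∑ m ∈ Finset.range (max N₁ N₂), ((-1:k)^(m+1)) • R k A Δ (m+1) a := by
      rw [h₁', map_sum]
      refine Finset.sum_congr rfl fun m _ => ?_
      rw [map_smul]
      congr 1
      rw [← conv_apply k A Δ (R k A Δ m) LinearMap.id a, ← R_succ k A Δ m]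
    have h3 : Saux k A D hnil a
        = ∑ m ∈ Finset.range (max N₁ N₂), ((-1:k)^(m+1)) • R k A Δ m a :=
      Saux_R k A Δ hcoassoc hder D hD hnil a (max N₁ N₂)
        (fun m hm => h₂v m (le_trans (le_max_right _ _) hm))
    rw [h2, h3]
    have hgN : ((-1:k)^(max N₁ N₂)) • R k A Δ (max N₁ N₂) a = 0 := by
      rw [h₂v (max N₁ N₂) (le_max_right _ _), smul_zero]
    have e2 : ∑ m ∈ Finset.range (max N₁ N₂), ((-1:k)^(m+1)) • R k A Δ (m+1) a
        = (∑ m ∈ Finset.range (max N₁ N₂), ((-1:k)^m) • R k A Δ m a)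
            + ((-1:k)^(max N₁ N₂)) • R k A Δ (max N₁ N₂) a
            - ((-1:k)^0) • R k A Δ 0 a := by
      refine eq_sub_of_add_eq ?_
      rw [← Finset.sum_range_succ' (fun m => ((-1:k)^m) • R k A Δ m a) (max N₁ N₂),
        Finset.sum_range_succ]
    have e3 : ∑ m ∈ Finset.range (max N₁ N₂), ((-1:k)^(m+1)) • R k A Δ m a
        = -∑ m ∈ Finset.range (max N₁ N₂), ((-1:k)^m) • R k A Δ m a := by
      rw [← Finset.sum_neg_distrib]
      refine Finset.sum_congr rfl fun m _ => ?_
      rw [pow_succ, mul_smul, neg_one_smul, smul_neg]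
    rw [e2, e3, hgN]
    have hR0 : ((-1:k)^0) • R k A Δ 0 a = a := by
      rw [pow_zero, one_smul]; rfl
    rw [hR0]
    abel
  · -- right antipode identity
    intro a
    obtain ⟨N₁, h₁v, h₁⟩ := llem k A Δ hcoassoc hder D hD hnil hnilR' (Δ a)
    obtain ⟨N₂, hN₂1, h₂v⟩ := hnilR a
    have h₁' : TensorProduct.map LinearMap.id (Saux k A D hnil) (Δ a)
        = ∑ m ∈ Finset.range (max N₁ N₂),
            ((-1:k)^(m+1)) • TensorProduct.map LinearMap.id (R k A Δ m) (Δ a) := by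
      rw [h₁]
      refine Finset.sum_subset (Finset.range_subset_range.mpr (le_max_left _ _)) ?_
      intro m _ hm
      rw [h₁v m (le_of_not_gt (fun hc => hm (Finset.mem_range.mpr hc))), smul_zero]
    have h2 : LinearMap.mul' k A (TensorProduct.map LinearMap.id (Saux k A D hnil) (Δ a))
        = ∑ m ∈ Finset.range (max N₁ N₂), ((-1:k)^(m+1)) • R k A Δ (m+1) a := by
      rw [h₁', map_sum]
      refine Finset.sum_congr rfl fun m _ => ?_
      rw [map_smul]
      congr 1
      rw [← conv_apply k A Δ LinearMap.id (R k A Δ m) a,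
        show (LinearMap.id : A →ₗ[k] A) = R k A Δ 0 from rfl,
        conv_R k A Δ hcoassoc 0 m, Nat.zero_add]
    have h3 : Saux k A D hnil a
        = ∑ m ∈ Finset.range (max N₁ N₂), ((-1:k)^(m+1)) • R k A Δ m a :=
      Saux_R k A Δ hcoassoc hder D hD hnil a (max N₁ N₂)
        (fun m hm => h₂v m (le_trans (le_max_right _ _) hm))
    rw [h2, h3]
    have hgN : ((-1:k)^(max N₁ N₂)) • R k A Δ (max N₁ N₂) a = 0 := by
      rw [h₂v (max N₁ N₂) (le_max_right _ _), smul_zero]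
    have e2 : ∑ m ∈ Finset.range (max N₁ N₂), ((-1:k)^(m+1)) • R k A Δ (m+1) a
        = (∑ m ∈ Finset.range (max N₁ N₂), ((-1:k)^m) • R k A Δ m a)
            + ((-1:k)^(max N₁ N₂)) • R k A Δ (max N₁ N₂) a
            - ((-1:k)^0) • R k A Δ 0 a := by
      refine eq_sub_of_add_eq ?_
      rw [← Finset.sum_range_succ' (fun m => ((-1:k)^m) • R k A Δ m a) (max N₁ N₂),
        Finset.sum_range_succ]
    have e3 : ∑ m ∈ Finset.range (max N₁ N₂), ((-1:k)^(m+1)) • R k A Δ m a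
        = -∑ m ∈ Finset.range (max N₁ N₂), ((-1:k)^m) • R k A Δ m a := by
      rw [← Finset.sum_neg_distrib]
      refine Finset.sum_congr rfl fun m _ => ?_
      rw [pow_succ, mul_smul, neg_one_smul, smul_neg]
    rw [e2, e3, hgN]
    have hR0 : ((-1:k)^0) • R k A Δ 0 a = a := by
      rw [pow_zero, one_smul]; rfl
    rw [hR0]
    abel
  · -- explicit formula
    intro a
    obtain ⟨N, hv⟩ := hnil a
    refine ⟨N, fun m hm => by rw [negpow k A D m a, hv m hm, smul_zero], ?_⟩
    rw [Saux_apply k A D hnil a N hv]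
    congr 1
    unfold esum
    refine Finset.sum_congr rfl fun m _ => ?_
    rw [negpow k A D m a, smul_smul, mul_comm]
end

section
/- The polynomial algebra k[x] with coproduct Δ(x^n) = Σ_{i=0}^{n-1} x^i ⊗ x^{n-1-i} is an infinitesimal unitary Hopf algebra with antipode S given by S(x^n) = -(x-1)^n for n ≥ 0; that is, S satisfies Σ S(a₍₁₎)a₍₂₎ + S(a) + a = 0 = Σ a₍₁₎S(a₍₂₎) + S(a) + a for all a ∈ k[x]. -/
open TensorProduct LinearMap Polynomial

/-- The linear coproduct on `k[x]` determined by `Δ(1) = 0` and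
`Δ(xⁿ) = Σ_{i=0}^{n-1} xⁱ ⊗ x^{n-1-i}` for `n ≥ 1`. -/
noncomputable def polyDelta (k : Type*) [Field k] :
    Polynomial k →ₗ[k] Polynomial k ⊗[k] Polynomial k :=
  (Polynomial.basisMonomials k).constr k
    (fun n => ∑ i ∈ Finset.range n, (Polynomial.X ^ i : Polynomial k) ⊗ₜ[k]
      (Polynomial.X ^ (n - 1 - i) : Polynomial k))

/-- The linear map `S` on `k[x]` determined by `S(xⁿ) = -(x-1)ⁿ`. -/
noncomputable def polyAntipode (k : Type*) [Field k] :
    Polynomial k →ₗ[k] Polynomial k :=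
  (Polynomial.basisMonomials k).constr k
    (fun n => -((Polynomial.X - 1 : Polynomial k) ^ n))

lemma basisMonomials_eq_pow (k : Type*) [Field k] (n : ℕ) :
    Polynomial.basisMonomials k n = (Polynomial.X : Polynomial k) ^ n := by
  rw [Polynomial.coe_basisMonomials, Polynomial.X_pow_eq_monomial]

lemma polyAntipode_pow (k : Type*) [Field k] (n : ℕ) :
    polyAntipode k ((Polynomial.X : Polynomial k) ^ n)
      = -((Polynomial.X - 1 : Polynomial k) ^ n) := by
  rw [← basisMonomials_eq_pow, polyAntipode, Module.Basis.constr_basis]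

lemma polyDelta_pow (k : Type*) [Field k] (n : ℕ) :
    polyDelta k ((Polynomial.X : Polynomial k) ^ n)
      = ∑ i ∈ Finset.range n, (Polynomial.X ^ i : Polynomial k) ⊗ₜ[k]
        (Polynomial.X ^ (n - 1 - i) : Polynomial k) := by
  rw [← basisMonomials_eq_pow, polyDelta, Module.Basis.constr_basis]

lemma geom_key (k : Type*) [Field k] (n : ℕ) :
    ∑ i ∈ Finset.range n, (Polynomial.X : Polynomial k) ^ i * (Polynomial.X - 1) ^ (n - 1 - i)
      = Polynomial.X ^ n - (Polynomial.X - 1) ^ n := by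
  have h := geom_sum₂_mul (Polynomial.X : Polynomial k) (Polynomial.X - 1) n
  simpa using h

lemma geom_key' (k : Type*) [Field k] (n : ℕ) :
    ∑ i ∈ Finset.range n, (Polynomial.X - 1 : Polynomial k) ^ i * Polynomial.X ^ (n - 1 - i)
      = Polynomial.X ^ n - (Polynomial.X - 1) ^ n := by
  have h := geom_sum₂_mul (Polynomial.X - 1 : Polynomial k) (Polynomial.X : Polynomial k) n
  simp only [sub_sub_cancel_left, mul_neg_one, neg_sub] at h
  linear_combination (-1 : Polynomial k) * h

/-- `k[x]` (char `k = 0`) with the coproduct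
`Δ(xⁿ) = Σ_{i=0}^{n-1} xⁱ ⊗ x^{n-1-i}` is an infinitesimal unitary Hopf algebra
with antipode `S(xⁿ) = -(x-1)ⁿ`: `S` satisfies
`Σ S(a₁)a₂ + S(a) + a = 0 = Σ a₁S(a₂) + S(a) + a` for all `a ∈ k[x]`. -/
theorem polyAntipode_is_antipode (k : Type*) [Field k] [CharZero k] :
    (∀ a : Polynomial k,
      LinearMap.mul' k (Polynomial k)
        (TensorProduct.map (polyAntipode k) LinearMap.id (polyDelta k a))
        + polyAntipode k a + a = 0)
    ∧ (∀ a : Polynomial k,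
      LinearMap.mul' k (Polynomial k)
        (TensorProduct.map LinearMap.id (polyAntipode k) (polyDelta k a))
        + polyAntipode k a + a = 0) := by
  constructor
  · intro a
    have hF : ((LinearMap.mul' k (Polynomial k)).comp
        ((TensorProduct.map (polyAntipode k) LinearMap.id).comp (polyDelta k))
        + polyAntipode k + LinearMap.id) = 0 := by
      apply (Polynomial.basisMonomials k).ext
      intro n
      simp only [LinearMap.add_apply, LinearMap.comp_apply, LinearMap.id_apply,
        LinearMap.zero_apply, basisMonomials_eq_pow, polyDelta_pow, polyAntipode_pow,
        map_sum, TensorProduct.map_tmul, LinearMap.mul'_apply]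
      simp only [neg_mul, Finset.sum_neg_distrib]
      rw [geom_key' k n]
      ring
    have := congrArg (fun f => f a) hF
    simpa using this
  · intro a
    have hF : ((LinearMap.mul' k (Polynomial k)).comp
        ((TensorProduct.map LinearMap.id (polyAntipode k)).comp (polyDelta k))
        + polyAntipode k + LinearMap.id) = 0 := by
      apply (Polynomial.basisMonomials k).ext
      intro n
      simp only [LinearMap.add_apply, LinearMap.comp_apply, LinearMap.id_apply,
        LinearMap.zero_apply, basisMonomials_eq_pow, polyDelta_pow, polyAntipode_pow,
        map_sum, TensorProduct.map_tmul, LinearMap.mul'_apply]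
      simp only [mul_neg, Finset.sum_neg_distrib]
      rw [geom_key k n]
      ring
    have := congrArg (fun f => f a) hF
    simpa using this
end

section
/- Let A be a graded unitary algebra over a field of characteristic 0 that is an infinitesimal unitary bialgebra whose coproduct Δ strictly lowers degree by one (Δ(A_n) ⊆ Σ_{p+q=n-1} A_p⊗A_q, Δ(1)=0). Then A is an infinitesimal unitary Hopf algebra: the map S = -Σ_{n≥0} (1/n!)(-D)^n, with D = m∘Δ, is well-defined (the sum is finite on each element) and satisfies m(S⊗id)Δ + S + id = 0 = m(id⊗S)Δ + S + id. -/
open TensorProduct LinearMap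

noncomputable section IHopfAux
variable {k : Type*} [Field k] {A : Type*} [Ring A] [Algebra k A]

namespace IHopf

def IsDer (Δ : A →ₗ[k] A ⊗[k] A) : Prop := ∀ a b : A, Δ (a * b) =
      LinearMap.rTensor A (LinearMap.mulLeft k a) (Δ b)
        + LinearMap.lTensor A (LinearMap.mulRight k b) (Δ a)

def IsCoassoc (Δ : A →ₗ[k] A ⊗[k] A) : Prop := ∀ a : A,
      LinearMap.lTensor A Δ (Δ a) = TensorProduct.assoc k A A A (LinearMap.rTensor A Δ (Δ a))

variable (Δ : A →ₗ[k] A ⊗[k] A)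

lemma mul'_rTensor_mulLeft (x : A) :
    LinearMap.mul' k A ∘ₗ rTensor A (mulLeft k x) = mulLeft k x ∘ₗ LinearMap.mul' k A := by
  apply TensorProduct.ext'; intro a b; simp [mul_assoc]

lemma mul'_lTensor_mulRight (y : A) :
    LinearMap.mul' k A ∘ₗ lTensor A (mulRight k y) = mulRight k y ∘ₗ LinearMap.mul' k A := by
  apply TensorProduct.ext'; intro a b; simp [mul_assoc]

/-- `D = m ∘ Δ` is a derivation. -/
lemma D_deriv (hder : IsDer Δ) (a b : A) :
    (LinearMap.mul' k A ∘ₗ Δ) (a * b)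
      = a * (LinearMap.mul' k A ∘ₗ Δ) b + (LinearMap.mul' k A ∘ₗ Δ) a * b := by
  have h1 := congrArg (LinearMap.mul' k A) (hder a b)
  simp only [map_add] at h1
  have h2 : LinearMap.mul' k A (rTensor A (mulLeft k a) (Δ b))
      = a * LinearMap.mul' k A (Δ b) := by
    have := congrFun (congrArg (DFunLike.coe) (mul'_rTensor_mulLeft (k := k) (A := A) a)) (Δ b)
    simpa using this
  have h3 : LinearMap.mul' k A (lTensor A (mulRight k b) (Δ a))
      = LinearMap.mul' k A (Δ a) * b := by
    have := congrFun (congrArg (DFunLike.coe) (mul'_lTensor_mulRight (k := k) (A := A) b)) (Δ a)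
    simpa using this
  simp only [comp_apply]
  rw [h1, h2, h3]

/-- Leibniz at the level of linear maps. -/
lemma D_mul' (hder : IsDer Δ) :
    (LinearMap.mul' k A ∘ₗ Δ) ∘ₗ LinearMap.mul' k A
      = LinearMap.mul' k A ∘ₗ rTensor A (LinearMap.mul' k A ∘ₗ Δ)
        + LinearMap.mul' k A ∘ₗ lTensor A (LinearMap.mul' k A ∘ₗ Δ) := by
  apply TensorProduct.ext'
  intro a b
  simp only [comp_apply, LinearMap.add_apply, mul'_apply, rTensor_tmul, lTensor_tmul]
  have := D_deriv Δ hder a b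
  simp only [comp_apply] at this ⊢
  rw [this]; exact add_comm _ _

end IHopf
end IHopfAux

section KeyAssoc
open IHopf
variable {k : Type*} [Field k] {A : Type*} [Ring A] [Algebra k A]
variable (Δ : A →ₗ[k] A ⊗[k] A)

lemma IHopf.assoc_aux (f : A →ₗ[k] A) :
    LinearMap.mul' k A ∘ₗ rTensor A f ∘ₗ lTensor A (LinearMap.mul' k A)
        ∘ₗ (TensorProduct.assoc k A A A).toLinearMap
      = LinearMap.mul' k A ∘ₗ rTensor A (LinearMap.mul' k A ∘ₗ rTensor A f) := by
  ext x y z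
  simp [mul_assoc]

lemma IHopf.assoc_aux' (f : A →ₗ[k] A) :
    LinearMap.mul' k A ∘ₗ lTensor A f ∘ₗ rTensor A (LinearMap.mul' k A)
      = (LinearMap.mul' k A ∘ₗ lTensor A (LinearMap.mul' k A ∘ₗ lTensor A f))
          ∘ₗ (TensorProduct.assoc k A A A).toLinearMap := by
  ext x y z
  simp [mul_assoc]

lemma IHopf.assoc_key (hco : IsCoassoc Δ) (f : A →ₗ[k] A) :
    LinearMap.mul' k A ∘ₗ rTensor A f ∘ₗ lTensor A (LinearMap.mul' k A ∘ₗ Δ) ∘ₗ Δ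
      = LinearMap.mul' k A ∘ₗ rTensor A (LinearMap.mul' k A ∘ₗ rTensor A f ∘ₗ Δ) ∘ₗ Δ := by
  apply LinearMap.ext; intro a
  simp only [comp_apply]
  rw [lTensor_comp, comp_apply, hco a,
    show rTensor A (LinearMap.mul' k A ∘ₗ rTensor A f ∘ₗ Δ) (Δ a)
      = rTensor A (LinearMap.mul' k A ∘ₗ rTensor A f) (rTensor A Δ (Δ a)) by
        simp [rTensor_comp, comp_apply]]
  have := congrFun (congrArg DFunLike.coe (IHopf.assoc_aux (k := k) (A := A) f))
    (rTensor A Δ (Δ a))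
  simpa using this

lemma IHopf.assoc_key' (hco : IsCoassoc Δ) (f : A →ₗ[k] A) :
    LinearMap.mul' k A ∘ₗ lTensor A f ∘ₗ rTensor A (LinearMap.mul' k A ∘ₗ Δ) ∘ₗ Δ
      = LinearMap.mul' k A ∘ₗ lTensor A (LinearMap.mul' k A ∘ₗ lTensor A f ∘ₗ Δ) ∘ₗ Δ := by
  apply LinearMap.ext; intro a
  simp only [comp_apply]
  rw [rTensor_comp, comp_apply,
    show lTensor A (LinearMap.mul' k A ∘ₗ lTensor A f ∘ₗ Δ) (Δ a)
      = lTensor A (LinearMap.mul' k A ∘ₗ lTensor A f) (lTensor A Δ (Δ a)) by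
        simp [lTensor_comp, comp_apply],
    hco a]
  have := congrFun (congrArg DFunLike.coe (IHopf.assoc_aux' (k := k) (A := A) f))
    (rTensor A Δ (Δ a))
  rw [← comp_apply (lTensor A f), lTensor_comp_rTensor]
  simpa using this

end KeyAssoc

noncomputable section ZSec
open IHopf
variable {k : Type*} [Field k] {A : Type*} [Ring A] [Algebra k A]

/-- iterated convolution powers of the identity. -/
def IHopf.Zl (Δ : A →ₗ[k] A ⊗[k] A) : ℕ → (A →ₗ[k] A)
  | 0 => LinearMap.id
  | r+1 => LinearMap.mul' k A ∘ₗ rTensor A (IHopf.Zl Δ r) ∘ₗ Δ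

def IHopf.Zr (Δ : A →ₗ[k] A ⊗[k] A) : ℕ → (A →ₗ[k] A)
  | 0 => LinearMap.id
  | r+1 => LinearMap.mul' k A ∘ₗ lTensor A (IHopf.Zr Δ r) ∘ₗ Δ

variable (Δ : A →ₗ[k] A ⊗[k] A)

lemma IHopf.D_comp_Zl (hder : IsDer Δ) (hco : IsCoassoc Δ) (r : ℕ) :
    (LinearMap.mul' k A ∘ₗ Δ) ∘ₗ Zl Δ r = ((r : k) + 1) • Zl Δ (r+1) := by
  induction r with
  | zero =>
    apply LinearMap.ext; intro a
    simp [Zl, rTensor_id]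
  | succ r ih =>
    apply LinearMap.ext; intro a
    have hu := congrFun (congrArg DFunLike.coe (D_mul' Δ hder)) (rTensor A (Zl Δ r) (Δ a))
    simp only [comp_apply] at hu
    have lhs1 : ((LinearMap.mul' k A ∘ₗ Δ) ∘ₗ Zl Δ (r+1)) a
        = LinearMap.mul' k A (Δ (LinearMap.mul' k A (rTensor A (Zl Δ r) (Δ a)))) := by
      simp [Zl, comp_apply]
    rw [lhs1, hu]
    have t1 : rTensor A (LinearMap.mul' k A ∘ₗ Δ) (rTensor A (Zl Δ r) (Δ a))
        = ((r : k) + 1) • rTensor A (Zl Δ (r+1)) (Δ a) := by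
      rw [← comp_apply, ← rTensor_comp, ih]
      simp
    have t2 : LinearMap.mul' k A (lTensor A (LinearMap.mul' k A ∘ₗ Δ)
          (rTensor A (Zl Δ r) (Δ a)))
        = Zl Δ (r+2) a := by
      have hc : lTensor A (LinearMap.mul' k A ∘ₗ Δ) (rTensor A (Zl Δ r) (Δ a))
          = rTensor A (Zl Δ r) (lTensor A (LinearMap.mul' k A ∘ₗ Δ) (Δ a)) := by
        rw [← comp_apply, ← comp_apply (rTensor A (Zl Δ r)),
          lTensor_comp_rTensor, rTensor_comp_lTensor]
      rw [hc]
      have := congrFun (congrArg DFunLike.coe (assoc_key Δ hco (Zl Δ r))) a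
      simp only [comp_apply] at this
      rw [this]
      simp [Zl, comp_apply]
    simp only [LinearMap.add_apply, comp_apply]
    rw [t1, map_smul, t2]
    have h3 : LinearMap.mul' k A (rTensor A (Zl Δ (r+1)) (Δ a)) = Zl Δ (r+2) a := by
      simp [Zl, comp_apply]
    rw [h3]
    rw [LinearMap.smul_apply]
    push_cast
    module

end ZSec

section ZSec2
open IHopf
variable {k : Type*} [Field k] {A : Type*} [Ring A] [Algebra k A]
variable (Δ : A →ₗ[k] A ⊗[k] A)

lemma IHopf.D_comp_Zr (hder : IsDer Δ) (hco : IsCoassoc Δ) (r : ℕ) :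
    (LinearMap.mul' k A ∘ₗ Δ) ∘ₗ Zr Δ r = ((r : k) + 1) • Zr Δ (r+1) := by
  induction r with
  | zero =>
    apply LinearMap.ext; intro a
    simp [Zr, lTensor_id]
  | succ r ih =>
    apply LinearMap.ext; intro a
    have hu := congrFun (congrArg DFunLike.coe (D_mul' Δ hder)) (lTensor A (Zr Δ r) (Δ a))
    simp only [comp_apply] at hu
    have lhs1 : ((LinearMap.mul' k A ∘ₗ Δ) ∘ₗ Zr Δ (r+1)) a
        = LinearMap.mul' k A (Δ (LinearMap.mul' k A (lTensor A (Zr Δ r) (Δ a)))) := by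
      simp [Zr, comp_apply]
    rw [lhs1, hu]
    have t1 : lTensor A (LinearMap.mul' k A ∘ₗ Δ) (lTensor A (Zr Δ r) (Δ a))
        = ((r : k) + 1) • lTensor A (Zr Δ (r+1)) (Δ a) := by
      rw [← comp_apply, ← lTensor_comp, ih]
      simp
    have t2 : LinearMap.mul' k A (rTensor A (LinearMap.mul' k A ∘ₗ Δ)
          (lTensor A (Zr Δ r) (Δ a)))
        = Zr Δ (r+2) a := by
      have hc : rTensor A (LinearMap.mul' k A ∘ₗ Δ) (lTensor A (Zr Δ r) (Δ a))
          = lTensor A (Zr Δ r) (rTensor A (LinearMap.mul' k A ∘ₗ Δ) (Δ a)) := by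
        rw [← comp_apply, ← comp_apply (lTensor A (Zr Δ r)),
          rTensor_comp_lTensor, lTensor_comp_rTensor]
      rw [hc]
      have := congrFun (congrArg DFunLike.coe (assoc_key' Δ hco (Zr Δ r))) a
      simp only [comp_apply] at this
      rw [this]
      simp [Zr, comp_apply]
    simp only [LinearMap.add_apply, comp_apply]
    rw [t1, map_smul, t2]
    have h3 : LinearMap.mul' k A (lTensor A (Zr Δ (r+1)) (Δ a)) = Zr Δ (r+2) a := by
      simp [Zr, comp_apply]
    rw [h3]
    rw [LinearMap.smul_apply]
    push_cast
    module

lemma IHopf.pow_D_Zl (hder : IsDer Δ) (hco : IsCoassoc Δ) (m : ℕ) :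
    (LinearMap.mul' k A ∘ₗ Δ) ^ m = (m.factorial : k) • Zl Δ m := by
  induction m with
  | zero => simp [Zl]; rfl
  | succ m ih =>
    rw [pow_succ', ih]
    have : (LinearMap.mul' k A ∘ₗ Δ) * ((m.factorial : k) • Zl Δ m)
        = (m.factorial : k) • ((LinearMap.mul' k A ∘ₗ Δ) ∘ₗ Zl Δ m) := by
      ext a; simp [Module.End.mul_apply, comp_apply, map_smul]
    rw [this, D_comp_Zl Δ hder hco m, smul_smul]
    congr 1
    rw [Nat.factorial_succ]
    push_cast; ring

lemma IHopf.pow_D_Zr (hder : IsDer Δ) (hco : IsCoassoc Δ) (m : ℕ) :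
    (LinearMap.mul' k A ∘ₗ Δ) ^ m = (m.factorial : k) • Zr Δ m := by
  induction m with
  | zero => simp [Zr]; rfl
  | succ m ih =>
    rw [pow_succ', ih]
    have : (LinearMap.mul' k A ∘ₗ Δ) * ((m.factorial : k) • Zr Δ m)
        = (m.factorial : k) • ((LinearMap.mul' k A ∘ₗ Δ) ∘ₗ Zr Δ m) := by
      ext a; simp [Module.End.mul_apply, comp_apply, map_smul]
    rw [this, D_comp_Zr Δ hder hco m, smul_smul]
    congr 1
    rw [Nat.factorial_succ]
    push_cast; ring

/-- Key left identity: `(m+1) ⬝ m∘(Dᵐ⊗id)∘Δ = D^(m+1)`. -/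
lemma IHopf.keyL (hder : IsDer Δ) (hco : IsCoassoc Δ) (m : ℕ) :
    ((m : k) + 1) • (LinearMap.mul' k A ∘ₗ
        rTensor A ((LinearMap.mul' k A ∘ₗ Δ) ^ m) ∘ₗ Δ)
      = (LinearMap.mul' k A ∘ₗ Δ) ^ (m+1) := by
  rw [pow_D_Zl Δ hder hco m, pow_D_Zl Δ hder hco (m+1)]
  have : LinearMap.mul' k A ∘ₗ rTensor A ((m.factorial : k) • Zl Δ m) ∘ₗ Δ
      = (m.factorial : k) • Zl Δ (m+1) := by
    ext a; simp [Zl, comp_apply, map_smul]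
  rw [this, smul_smul]
  congr 1
  rw [Nat.factorial_succ]
  push_cast; ring

lemma IHopf.keyR (hder : IsDer Δ) (hco : IsCoassoc Δ) (m : ℕ) :
    ((m : k) + 1) • (LinearMap.mul' k A ∘ₗ
        lTensor A ((LinearMap.mul' k A ∘ₗ Δ) ^ m) ∘ₗ Δ)
      = (LinearMap.mul' k A ∘ₗ Δ) ^ (m+1) := by
  rw [pow_D_Zr Δ hder hco m, pow_D_Zr Δ hder hco (m+1)]
  have : LinearMap.mul' k A ∘ₗ lTensor A ((m.factorial : k) • Zr Δ m) ∘ₗ Δ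
      = (m.factorial : k) • Zr Δ (m+1) := by
    ext a; simp [Zr, comp_apply, map_smul]
  rw [this, smul_smul]
  congr 1
  rw [Nat.factorial_succ]
  push_cast; ring

end ZSec2


/-- Let `A` be a graded unitary algebra over a field of
characteristic `0` which is an infinitesimal unitary bialgebra whose coproduct
strictly lowers degree by one (`Δ(Aₙ) ⊆ Σ_{p+q=n-1} Aₚ⊗A_q`, `Δ(1) = 0`,
`A₀ = k·1`).  Then `A` is an infinitesimal unitary Hopf algebra: the map
`S = -Σ_{n≥0} (1/n!)(-D)ⁿ` with `D = m ∘ Δ` is well-defined (the sum is finite on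
each element, since `(-D)^m` kills `Aₙ` for `m > n`) and satisfies
`m(S⊗id)Δ + S + id = 0 = m(id⊗S)Δ + S + id`. -/
theorem graded_infinitesimal_unitary_hopf
    (k : Type*) [Field k] [CharZero k] (A : Type*) [Ring A] [Algebra k A]
    (𝒜 : ℕ → Submodule k A)
    (h0 : 𝒜 0 = Submodule.span k {(1 : A)})
    (hmul : ∀ p q : ℕ, ∀ x ∈ 𝒜 p, ∀ y ∈ 𝒜 q, x * y ∈ 𝒜 (p + q))
    (htop : (⨆ n, 𝒜 n) = ⊤)
    (Δ : A →ₗ[k] A ⊗[k] A)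
    (hcoassoc : ∀ a : A,
      LinearMap.lTensor A Δ (Δ a) = TensorProduct.assoc k A A A (LinearMap.rTensor A Δ (Δ a)))
    (hder : ∀ a b : A, Δ (a * b) =
      LinearMap.rTensor A (LinearMap.mulLeft k a) (Δ b)
        + LinearMap.lTensor A (LinearMap.mulRight k b) (Δ a))
    (h1 : Δ 1 = 0)
    (hΔ : ∀ n : ℕ, 1 ≤ n → ∀ a ∈ 𝒜 n, Δ a ∈ Submodule.span k
      {t : A ⊗[k] A | ∃ p q : ℕ, p + q = n - 1
        ∧ ∃ x ∈ 𝒜 p, ∃ y ∈ 𝒜 q, t = x ⊗ₜ[k] y})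
    (D : A →ₗ[k] A) (hD : D = LinearMap.mul' k A ∘ₗ Δ) :
    ∃ S : A →ₗ[k] A,
      (∀ n : ℕ, ∀ a ∈ 𝒜 n,
        (∀ m : ℕ, n < m → ((-D) ^ m) a = 0)
          ∧ S a = -∑ m ∈ Finset.range (n + 1), (m.factorial : k)⁻¹ • ((-D) ^ m) a)
      ∧ (∀ a : A,
          LinearMap.mul' k A (TensorProduct.map S LinearMap.id (Δ a)) + S a + a = 0)
      ∧ (∀ a : A,
          LinearMap.mul' k A (TensorProduct.map LinearMap.id S (Δ a)) + S a + a = 0) := by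
  classical
  have hIsDer : IHopf.IsDer Δ := hder
  have hIsCo : IHopf.IsCoassoc Δ := hcoassoc
  have negpow : ∀ m : ℕ, ((-D) ^ m) = ((-1:k)^m) • (D ^ m) := by
    intro m
    induction m with
    | zero => simp
    | succ m ih =>
      rw [pow_succ, ih, smul_mul_assoc,
        show D ^ m * -D = -(D ^ m * D) from LinearMap.ext fun x => by simp [Module.End.mul_apply],
        smul_neg, ← neg_smul, ← pow_succ,
        pow_succ (-1:k)]
      congr 1
      ring
  have hD0 : ∀ a ∈ 𝒜 0, D a = 0 := by
    intro a ha
    rw [h0, Submodule.mem_span_singleton] at ha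
    obtain ⟨c, rfl⟩ := ha
    rw [map_smul, hD, comp_apply, h1, map_zero, smul_zero]
  have hDdeg : ∀ n : ℕ, ∀ a ∈ 𝒜 (n+1), D a ∈ 𝒜 n := by
    intro n a ha
    have hspan := hΔ (n+1) (Nat.le_add_left 1 n) a ha
    have hle : Submodule.span k
        {t : A ⊗[k] A | ∃ p q : ℕ, p + q = (n+1) - 1
          ∧ ∃ x ∈ 𝒜 p, ∃ y ∈ 𝒜 q, t = x ⊗ₜ[k] y}
        ≤ (𝒜 n).comap (LinearMap.mul' k A) := by
      rw [Submodule.span_le]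
      rintro t ⟨p, q, hpq, x, hx, y, hy, rfl⟩
      simp only [Set.mem_setOf_eq, SetLike.mem_coe, Submodule.mem_comap, mul'_apply]
      have := hmul p q x hx y hy
      rwa [hpq, Nat.add_sub_cancel] at this
    have := hle hspan
    rw [Submodule.mem_comap] at this
    rwa [hD, comp_apply]
  have hnil : ∀ n : ℕ, ∀ a ∈ 𝒜 n, ∀ m : ℕ, n < m → (D ^ m) a = 0 := by
    intro n
    induction n with
    | zero =>
      intro a ha m hm
      obtain ⟨m, rfl⟩ := Nat.exists_eq_succ_of_ne_zero (Nat.pos_iff_ne_zero.mp hm)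
      rw [pow_succ, Module.End.mul_apply, hD0 a ha, map_zero]
    | succ n ih =>
      intro a ha m hm
      obtain ⟨m, rfl⟩ := Nat.exists_eq_succ_of_ne_zero
        (Nat.pos_iff_ne_zero.mp (Nat.lt_of_le_of_lt (Nat.zero_le _) hm))
      rw [pow_succ, Module.End.mul_apply]
      exact ih (D a) (hDdeg n a ha) m (Nat.lt_of_succ_lt_succ hm)
  have hN : ∀ a : A, ∃ N : ℕ, ∀ m : ℕ, N < m → (D ^ m) a = 0 := by
    intro a
    let T : Submodule k A :=
      { carrier := {a : A | ∃ N : ℕ, ∀ m : ℕ, N < m → (D ^ m) a = 0}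
        add_mem' := by
          rintro x y ⟨N1, h1'⟩ ⟨N2, h2'⟩
          exact ⟨max N1 N2, fun m hm => by
            rw [map_add, h1' m (lt_of_le_of_lt (le_max_left _ _) hm),
              h2' m (lt_of_le_of_lt (le_max_right _ _) hm), add_zero]⟩
        zero_mem' := ⟨0, fun m _ => map_zero _⟩
        smul_mem' := by
          rintro c x ⟨N, hN'⟩
          exact ⟨N, fun m hm => by rw [map_smul, hN' m hm, smul_zero]⟩ }
    have : (⊤ : Submodule k A) ≤ T := by
      rw [← htop]
      exact iSup_le fun n a ha => ⟨n, hnil n a ha⟩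
    exact this Submodule.mem_top
  -- stability of truncated exponential sums
  have stab : ∀ (a : A) (N M : ℕ), (∀ m : ℕ, N < m → (D ^ m) a = 0) → N ≤ M →
      ∑ m ∈ Finset.range (M+1), (m.factorial : k)⁻¹ • ((-D) ^ m) a
        = ∑ m ∈ Finset.range (N+1), (m.factorial : k)⁻¹ • ((-D) ^ m) a := by
    intro a N M hv hNM
    refine (Finset.sum_subset (Finset.range_subset_range.mpr (Nat.succ_le_succ hNM)) ?_).symm
    intro x _ hxn
    rw [Finset.mem_range, not_lt] at hxn
    rw [negpow, LinearMap.smul_apply, hv x (Nat.lt_of_succ_le hxn), smul_zero, smul_zero]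
  -- the antipode
  let S : A →ₗ[k] A :=
    { toFun := fun a => -∑ m ∈ Finset.range ((hN a).choose + 1),
        (m.factorial : k)⁻¹ • ((-D) ^ m) a
      map_add' := by
        intro a b
        beta_reduce
        have hNaM : (hN a).choose ≤ max (max (hN a).choose (hN b).choose) (hN (a+b)).choose :=
          le_trans (le_max_left _ _) (le_max_left _ _)
        have hNbM : (hN b).choose ≤ max (max (hN a).choose (hN b).choose) (hN (a+b)).choose :=
          le_trans (le_max_right _ _) (le_max_left _ _)
        have hNabM : (hN (a+b)).choose ≤ max (max (hN a).choose (hN b).choose) (hN (a+b)).choose :=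
          le_max_right _ _
        rw [← stab (a+b) _ _ (hN (a+b)).choose_spec hNabM,
          ← stab a _ _ (hN a).choose_spec hNaM,
          ← stab b _ _ (hN b).choose_spec hNbM, ← neg_add]
        congr 1
        rw [← Finset.sum_add_distrib]
        exact Finset.sum_congr rfl fun m _ => by rw [map_add, smul_add]
      map_smul' := by
        intro c a
        beta_reduce
        have hcaM : (hN (c • a)).choose ≤ max (hN (c • a)).choose (hN a).choose :=
          le_max_left _ _
        have haM : (hN a).choose ≤ max (hN (c • a)).choose (hN a).choose :=
          le_max_right _ _
        simp only [RingHom.id_apply]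
        rw [← stab (c • a) _ _ (hN (c • a)).choose_spec hcaM,
          ← stab a _ _ (hN a).choose_spec haM]
        rw [Finset.sum_congr rfl
          (fun m _ => by rw [map_smul, smul_comm c] :
            ∀ m ∈ Finset.range (max (hN (c • a)).choose (hN a).choose + 1),
              (m.factorial : k)⁻¹ • ((-D) ^ m) (c • a)
                = c • ((m.factorial : k)⁻¹ • ((-D) ^ m) a)),
          ← Finset.smul_sum, smul_neg] }
  have hSform : ∀ (a : A) (N : ℕ), (∀ m : ℕ, N < m → (D ^ m) a = 0) →
      S a = -∑ m ∈ Finset.range (N+1), (m.factorial : k)⁻¹ • ((-D) ^ m) a := by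
    intro a N hv
    show -∑ m ∈ Finset.range ((hN a).choose + 1), (m.factorial : k)⁻¹ • ((-D) ^ m) a = _
    rw [← stab a _ _ (hN a).choose_spec (le_max_left (hN a).choose N),
      stab a _ _ hv (le_max_right (hN a).choose N)]
  refine ⟨S, fun n a ha => ⟨fun m hm => by
      rw [negpow, LinearMap.smul_apply, hnil n a ha m hm, smul_zero],
    hSform a n (hnil n a ha)⟩, ?_, ?_⟩
  · -- left antipode identity
    have key : ∀ n : ℕ, ∀ a ∈ 𝒜 n,
        LinearMap.mul' k A (TensorProduct.map S LinearMap.id (Δ a)) + S a + a = 0 := by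
      intro n a ha
      match n, ha with
      | 0, ha =>
        have hΔ0 : Δ a = 0 := by
          rw [h0, Submodule.mem_span_singleton] at ha
          obtain ⟨c, rfl⟩ := ha
          rw [map_smul, h1, smul_zero]
        have hSa : S a = -a := by
          rw [hSform a 0 (hnil 0 a ha)]
          simp
        rw [hΔ0, map_zero, map_zero, hSa]
        abel
      | (n+1), ha =>
      have hC1 : TensorProduct.map S LinearMap.id (Δ a)
          = -∑ m ∈ Finset.range (n+2),
              (m.factorial : k)⁻¹ • rTensor A ((-D) ^ m) (Δ a) := by
        set Ψ : A ⊗[k] A →ₗ[k] A ⊗[k] A :=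
          TensorProduct.map S LinearMap.id
            + ∑ m ∈ Finset.range (n+2), (m.factorial : k)⁻¹ • rTensor A ((-D) ^ m) with hΨ
        have hker : Submodule.span k
            {t : A ⊗[k] A | ∃ p q : ℕ, p + q = (n+1) - 1
              ∧ ∃ x ∈ 𝒜 p, ∃ y ∈ 𝒜 q, t = x ⊗ₜ[k] y} ≤ ker Ψ := by
          rw [Submodule.span_le]
          rintro t ⟨p, q, hpq, x, hx, y, hy, rfl⟩
          rw [SetLike.mem_coe, mem_ker]
          have hp : p ≤ n := by omega
          have hxS : S x = -∑ m ∈ Finset.range (n+2), (m.factorial : k)⁻¹ • ((-D) ^ m) x := by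
            exact hSform x (n+1) fun m hm => hnil p x hx m (by omega)
          rw [hΨ]
          simp only [LinearMap.add_apply, map_tmul, id_coe, id_eq, LinearMap.sum_apply,
            LinearMap.smul_apply, rTensor_tmul]
          rw [Finset.sum_congr rfl
            (fun m _ => (TensorProduct.smul_tmul' ((m.factorial : k)⁻¹) (((-D) ^ m) x) y) :
              ∀ m ∈ Finset.range (n+2),
                (m.factorial : k)⁻¹ • (((-D) ^ m) x ⊗ₜ[k] y)
                  = ((m.factorial : k)⁻¹ • ((-D) ^ m) x) ⊗ₜ[k] y),
            ← TensorProduct.sum_tmul, ← TensorProduct.add_tmul, hxS,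
            neg_add_cancel, TensorProduct.zero_tmul]
        have hmem := hker (hΔ (n+1) (by omega) a ha)
        rw [mem_ker, hΨ] at hmem
        simp only [LinearMap.add_apply, LinearMap.sum_apply, LinearMap.smul_apply] at hmem
        have heq := eq_neg_of_add_eq_zero_left hmem
        rw [heq]
      have hfac : ∀ m : ℕ, ((m+1).factorial : k) ≠ 0 :=
        fun m => Nat.cast_ne_zero.mpr (Nat.factorial_ne_zero _)
      have hmulC : LinearMap.mul' k A (TensorProduct.map S LinearMap.id (Δ a))
          = -∑ m ∈ Finset.range (n+2),
              ((-1:k)^m * (((m+1).factorial : k))⁻¹) • (D ^ (m+1)) a := by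
        rw [hC1, map_neg, map_sum]
        congr 1
        refine Finset.sum_congr rfl fun m _ => ?_
        rw [map_smul, negpow, LinearMap.rTensor_smul, LinearMap.smul_apply, map_smul]
        have hk := congrFun (congrArg DFunLike.coe (IHopf.keyL Δ hIsDer hIsCo m)) a
        rw [← hD] at hk
        simp only [LinearMap.smul_apply, comp_apply] at hk
        have hm1 : ((m : k) + 1) ≠ 0 := Nat.cast_add_one_ne_zero m
        have hX : LinearMap.mul' k A (rTensor A (D ^ m) (Δ a))
            = ((m : k) + 1)⁻¹ • (D ^ (m+1)) a := by
          rw [eq_inv_smul_iff₀ hm1]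
          exact hk
        rw [hX, smul_smul, smul_smul]
        congr 1
        have : ((m+1).factorial : k) = ((m:k)+1) * (m.factorial : k) := by
          rw [Nat.factorial_succ]; push_cast; ring
        rw [this]
        have hf : (m.factorial : k) ≠ 0 := Nat.cast_ne_zero.mpr (Nat.factorial_ne_zero _)
        field_simp
      have hSa : S a = -∑ m ∈ Finset.range (n+2),
          ((-1:k)^m * (m.factorial : k)⁻¹) • (D ^ m) a := by
        rw [hSform a (n+1) (hnil (n+1) a ha)]
        congr 1
        refine Finset.sum_congr rfl fun m _ => ?_
        rw [negpow, LinearMap.smul_apply, smul_smul, mul_comm]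
      rw [hmulC, hSa]
      have e1 : ∑ m ∈ Finset.range (n+2), ((-1:k)^m * (m.factorial : k)⁻¹) • (D ^ m) a
          = (∑ m ∈ Finset.range (n+1),
              ((-1:k)^(m+1) * ((m+1).factorial : k)⁻¹) • (D ^ (m+1)) a) + a := by
        rw [Finset.sum_range_succ']
        congr 1
        simp
      have e2 : ∑ m ∈ Finset.range (n+2),
            ((-1:k)^m * (((m+1).factorial : k))⁻¹) • (D ^ (m+1)) a
          = ∑ m ∈ Finset.range (n+1),
            ((-1:k)^m * (((m+1).factorial : k))⁻¹) • (D ^ (m+1)) a := by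
        rw [Finset.sum_range_succ, hnil (n+1) a ha (n+2) (by omega), smul_zero, add_zero]
      have e3 : ∑ m ∈ Finset.range (n+1),
            ((-1:k)^m * (((m+1).factorial : k))⁻¹) • (D ^ (m+1)) a
          = -∑ m ∈ Finset.range (n+1),
            ((-1:k)^(m+1) * ((m+1).factorial : k)⁻¹) • (D ^ (m+1)) a := by
        rw [← Finset.sum_neg_distrib]
        refine Finset.sum_congr rfl fun m _ => ?_
        rw [← neg_smul]
        congr 1
        rw [pow_succ]
        ring
      rw [e1, e2, e3]
      abel
    have hker : (⊤ : Submodule k A) ≤ ker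
        ((LinearMap.mul' k A ∘ₗ (TensorProduct.map S LinearMap.id) ∘ₗ Δ) + S + LinearMap.id) := by
      rw [← htop]
      refine iSup_le fun n a ha => ?_
      rw [mem_ker]
      exact key n a ha
    intro a
    have := hker (Submodule.mem_top (x := a))
    rw [mem_ker] at this
    exact this
  · -- right antipode identity
    have key : ∀ n : ℕ, ∀ a ∈ 𝒜 n,
        LinearMap.mul' k A (TensorProduct.map LinearMap.id S (Δ a)) + S a + a = 0 := by
      intro n a ha
      match n, ha with
      | 0, ha =>
        have hΔ0 : Δ a = 0 := by
          rw [h0, Submodule.mem_span_singleton] at ha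
          obtain ⟨c, rfl⟩ := ha
          rw [map_smul, h1, smul_zero]
        have hSa : S a = -a := by
          rw [hSform a 0 (hnil 0 a ha)]
          simp
        rw [hΔ0, map_zero, map_zero, hSa]
        abel
      | (n+1), ha =>
      have hC1 : TensorProduct.map LinearMap.id S (Δ a)
          = -∑ m ∈ Finset.range (n+2),
              (m.factorial : k)⁻¹ • lTensor A ((-D) ^ m) (Δ a) := by
        set Ψ : A ⊗[k] A →ₗ[k] A ⊗[k] A :=
          TensorProduct.map LinearMap.id S
            + ∑ m ∈ Finset.range (n+2), (m.factorial : k)⁻¹ • lTensor A ((-D) ^ m) with hΨ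
        have hker : Submodule.span k
            {t : A ⊗[k] A | ∃ p q : ℕ, p + q = (n+1) - 1
              ∧ ∃ x ∈ 𝒜 p, ∃ y ∈ 𝒜 q, t = x ⊗ₜ[k] y} ≤ ker Ψ := by
          rw [Submodule.span_le]
          rintro t ⟨p, q, hpq, x, hx, y, hy, rfl⟩
          rw [SetLike.mem_coe, mem_ker]
          have hq : q ≤ n := by omega
          have hyS : S y = -∑ m ∈ Finset.range (n+2), (m.factorial : k)⁻¹ • ((-D) ^ m) y := by
            exact hSform y (n+1) fun m hm => hnil q y hy m (by omega)
          rw [hΨ]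
          simp only [LinearMap.add_apply, map_tmul, id_coe, id_eq, LinearMap.sum_apply,
            LinearMap.smul_apply, lTensor_tmul]
          rw [Finset.sum_congr rfl
            (fun m _ => (TensorProduct.tmul_smul ((m.factorial : k)⁻¹) x (((-D) ^ m) y)).symm :
              ∀ m ∈ Finset.range (n+2),
                (m.factorial : k)⁻¹ • (x ⊗ₜ[k] ((-D) ^ m) y)
                  = x ⊗ₜ[k] ((m.factorial : k)⁻¹ • ((-D) ^ m) y)),
            ← TensorProduct.tmul_sum, ← TensorProduct.tmul_add, hyS,
            neg_add_cancel, TensorProduct.tmul_zero]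
        have hmem := hker (hΔ (n+1) (by omega) a ha)
        rw [mem_ker, hΨ] at hmem
        simp only [LinearMap.add_apply, LinearMap.sum_apply, LinearMap.smul_apply] at hmem
        have heq := eq_neg_of_add_eq_zero_left hmem
        rw [heq]
      have hmulC : LinearMap.mul' k A (TensorProduct.map LinearMap.id S (Δ a))
          = -∑ m ∈ Finset.range (n+2),
              ((-1:k)^m * (((m+1).factorial : k))⁻¹) • (D ^ (m+1)) a := by
        rw [hC1, map_neg, map_sum]
        congr 1
        refine Finset.sum_congr rfl fun m _ => ?_
        rw [map_smul, negpow, LinearMap.lTensor_smul, LinearMap.smul_apply, map_smul]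
        have hk := congrFun (congrArg DFunLike.coe (IHopf.keyR Δ hIsDer hIsCo m)) a
        rw [← hD] at hk
        simp only [LinearMap.smul_apply, comp_apply] at hk
        have hm1 : ((m : k) + 1) ≠ 0 := Nat.cast_add_one_ne_zero m
        have hX : LinearMap.mul' k A (lTensor A (D ^ m) (Δ a))
            = ((m : k) + 1)⁻¹ • (D ^ (m+1)) a := by
          rw [eq_inv_smul_iff₀ hm1]
          exact hk
        rw [hX, smul_smul, smul_smul]
        congr 1
        have : ((m+1).factorial : k) = ((m:k)+1) * (m.factorial : k) := by
          rw [Nat.factorial_succ]; push_cast; ring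
        rw [this]
        have hf : (m.factorial : k) ≠ 0 := Nat.cast_ne_zero.mpr (Nat.factorial_ne_zero _)
        field_simp
      have hSa : S a = -∑ m ∈ Finset.range (n+2),
          ((-1:k)^m * (m.factorial : k)⁻¹) • (D ^ m) a := by
        rw [hSform a (n+1) (hnil (n+1) a ha)]
        congr 1
        refine Finset.sum_congr rfl fun m _ => ?_
        rw [negpow, LinearMap.smul_apply, smul_smul, mul_comm]
      rw [hmulC, hSa]
      have e1 : ∑ m ∈ Finset.range (n+2), ((-1:k)^m * (m.factorial : k)⁻¹) • (D ^ m) a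
          = (∑ m ∈ Finset.range (n+1),
              ((-1:k)^(m+1) * ((m+1).factorial : k)⁻¹) • (D ^ (m+1)) a) + a := by
        rw [Finset.sum_range_succ']
        congr 1
        simp
      have e2 : ∑ m ∈ Finset.range (n+2),
            ((-1:k)^m * (((m+1).factorial : k))⁻¹) • (D ^ (m+1)) a
          = ∑ m ∈ Finset.range (n+1),
            ((-1:k)^m * (((m+1).factorial : k))⁻¹) • (D ^ (m+1)) a := by
        rw [Finset.sum_range_succ, hnil (n+1) a ha (n+2) (by omega), smul_zero, add_zero]
      have e3 : ∑ m ∈ Finset.range (n+1),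
            ((-1:k)^m * (((m+1).factorial : k))⁻¹) • (D ^ (m+1)) a
          = -∑ m ∈ Finset.range (n+1),
            ((-1:k)^(m+1) * ((m+1).factorial : k)⁻¹) • (D ^ (m+1)) a := by
        rw [← Finset.sum_neg_distrib]
        refine Finset.sum_congr rfl fun m _ => ?_
        rw [← neg_smul]
        congr 1
        rw [pow_succ]
        ring
      rw [e1, e2, e3]
      abel
    have hker : (⊤ : Submodule k A) ≤ ker
        ((LinearMap.mul' k A ∘ₗ (TensorProduct.map LinearMap.id S) ∘ₗ Δ) + S + LinearMap.id) := by
      rw [← htop]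
      refine iSup_le fun n a ha => ?_
      rw [mem_ker]
      exact key n a ha
    intro a
    have := hker (Submodule.mem_top (x := a))
    rw [mem_ker] at this
    exact this
end

section
/- Let (A,m,1,Δ,P) be a unitary algebra with a linear operator P and a coproduct Δ satisfying Δ(1) = 0, the derivation rule Δ(ab) = a·Δ(b) + Δ(a)·b, and the ε-cocycle condition Δ∘P = id⊗1 + (id⊗P)∘Δ. Let (B,m',1',Δ',Q) be another such structure and φ : A → B a unitary algebra morphism with φ∘P = Q∘φ. If (φ⊗φ)Δ(a) = Δ'(φ(a)) and (φ⊗φ)Δ(b) = Δ'(φ(b)), then (φ⊗φ)Δ(ab) = Δ'(φ(ab)) and (φ⊗φ)Δ(P(a)) = Δ'(φ(P(a))). That is, the set of elements on which φ is a coalgebra morphism is closed under both multiplication and the operator P. -/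
open TensorProduct LinearMap

/-- Let `(A,m,1,Δ,P)` and `(B,m',1',Δ',Q)` be unitary algebras with
linear operators and coproducts satisfying `Δ(1) = 0`, the derivation rule and the
ε-cocycle condition, and let `φ : A → B` be a unitary algebra morphism with
`φ ∘ P = Q ∘ φ`.  If `φ` is compatible with the coproducts at `a` and at `b`, then
it is compatible at `a * b` and at `P(a)`. -/
theorem coalgebra_hom_property_closed_under_mul_and_operator
    (k : Type*) [CommRing k] (A B : Type*) [Ring A] [Algebra k A] [Ring B] [Algebra k B]
    (Δ : A →ₗ[k] A ⊗[k] A) (P : A →ₗ[k] A)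
    (Δ' : B →ₗ[k] B ⊗[k] B) (Q : B →ₗ[k] B)
    (h1A : Δ 1 = 0)
    (hderA : ∀ a b : A, Δ (a * b) =
      LinearMap.rTensor A (LinearMap.mulLeft k a) (Δ b)
        + LinearMap.lTensor A (LinearMap.mulRight k b) (Δ a))
    (hPA : ∀ a : A, Δ (P a) = a ⊗ₜ[k] (1 : A) + LinearMap.lTensor A P (Δ a))
    (h1B : Δ' 1 = 0)
    (hderB : ∀ a b : B, Δ' (a * b) =
      LinearMap.rTensor B (LinearMap.mulLeft k a) (Δ' b)
        + LinearMap.lTensor B (LinearMap.mulRight k b) (Δ' a))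
    (hQB : ∀ b : B, Δ' (Q b) = b ⊗ₜ[k] (1 : B) + LinearMap.lTensor B Q (Δ' b))
    (φ : A →ₐ[k] B)
    (hφP : ∀ a : A, φ (P a) = Q (φ a))
    (a b : A)
    (hφa : TensorProduct.map φ.toLinearMap φ.toLinearMap (Δ a) = Δ' (φ a))
    (hφb : TensorProduct.map φ.toLinearMap φ.toLinearMap (Δ b) = Δ' (φ b)) :
    TensorProduct.map φ.toLinearMap φ.toLinearMap (Δ (a * b)) = Δ' (φ (a * b))
      ∧ TensorProduct.map φ.toLinearMap φ.toLinearMap (Δ (P a)) = Δ' (φ (P a)) := by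
  have hL : ∀ (x : A) (t : A ⊗[k] A),
      TensorProduct.map φ.toLinearMap φ.toLinearMap
        (LinearMap.rTensor A (LinearMap.mulLeft k x) t)
      = LinearMap.rTensor B (LinearMap.mulLeft k (φ x))
          (TensorProduct.map φ.toLinearMap φ.toLinearMap t) := by
    intro x t
    induction t using TensorProduct.induction_on with
    | zero => simp
    | tmul y z => simp [map_mul]
    | add u v hu hv => simp [map_add, hu, hv]
  have hR : ∀ (x : A) (t : A ⊗[k] A),
      TensorProduct.map φ.toLinearMap φ.toLinearMap
        (LinearMap.lTensor A (LinearMap.mulRight k x) t)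
      = LinearMap.lTensor B (LinearMap.mulRight k (φ x))
          (TensorProduct.map φ.toLinearMap φ.toLinearMap t) := by
    intro x t
    induction t using TensorProduct.induction_on with
    | zero => simp
    | tmul y z => simp [map_mul]
    | add u v hu hv => simp [map_add, hu, hv]
  have hPQ : ∀ (t : A ⊗[k] A),
      TensorProduct.map φ.toLinearMap φ.toLinearMap (LinearMap.lTensor A P t)
      = LinearMap.lTensor B Q (TensorProduct.map φ.toLinearMap φ.toLinearMap t) := by
    intro t
    induction t using TensorProduct.induction_on with
    | zero => simp
    | tmul y z => simp [hφP]
    | add u v hu hv => simp [map_add, hu, hv]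
  constructor
  · rw [hderA, map_add, hL, hR, hφa, hφb, map_mul, hderB]
  · rw [hPA, map_add, hPQ, hφa, hφP, hQB]
    simp
end
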